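/- arXiv:2212.06379 — 5 statements merged into one kernel-verified Lean document; each statement's English description precedes it below -/
import Mathlib

section
/- In Algorithm GDA, the step-size sequence {λ_k} is bounded away from zero; equivalently, the step-size is decreased only finitely many times, so there exists k₁ such that λ_k = λ_{k₁} for all k ≥ k₁. -/
open Set

lemma descent_lemma {E : Type*} [NormedAddCommGroup E] [InnerProductSpace ℝ E] [CompleteSpace E]
    (f : E → ℝ) (f' : E → E) (U : Set E) (hU : IsOpen U)
    (hf : ∀ x ∈ U, HasGradientAt f (f' x) x) (L : ℝ)
    (hLip : ∀ x ∈ U, ∀ y ∈ U, ‖f' x - f' y‖ ≤ L * ‖x - y‖)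
    (C : Set E) (hCconv : Convex ℝ C) (hCU : C ⊆ U)
    (a b : E) (ha : a ∈ C) (hb : b ∈ C) :
    f b ≤ f a + (inner ℝ (f' a) (b - a) : ℝ) + L / 2 * ‖b - a‖ ^ 2 := by
  set γ : ℝ → E := fun t => a + t • (b - a) with hγdef
  have hγC : ∀ t ∈ Icc (0:ℝ) 1, γ t ∈ C := fun t ht =>
    hCconv.add_smul_sub_mem ha hb ht
  have hγd : ∀ t : ℝ, HasDerivAt γ (b - a) t := by
    intro t
    have : HasDerivAt (fun s : ℝ => s • (b - a)) ((1:ℝ) • (b - a)) t :=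
      (hasDerivAt_id t).smul_const (b - a)
    exact ((hasDerivAt_const t a).add this).congr_deriv (by simp)
  set I : ℝ := (inner ℝ (f' a) (b - a) : ℝ) with hI
  set N : ℝ := ‖b - a‖ ^ 2 with hN
  set ψ : ℝ → ℝ := fun t => f a + t * I + L / 2 * N * t ^ 2 - f (γ t) with hψ
  have hψd : ∀ t ∈ Icc (0:ℝ) 1,
      HasDerivAt ψ (I + L / 2 * N * (2 * t) - (inner ℝ (f' (γ t)) (b - a) : ℝ)) t := by
    intro t ht
    have hmem : γ t ∈ U := hCU (hγC t ht)
    have hfd : HasDerivAt (fun s => f (γ s)) ((inner ℝ (f' (γ t)) (b - a) : ℝ)) t := by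
      have h1 := (hf (γ t) hmem).hasFDerivAt.comp_hasDerivAt t (hγd t)
      simp at h1; exact h1
    have h2 : HasDerivAt (fun s : ℝ => f a + s * I + L / 2 * N * s ^ 2)
        (I + L / 2 * N * (2 * t)) t := by
      have ha1 : HasDerivAt (fun s : ℝ => s * I) I t := by
        simpa using (hasDerivAt_id t).mul_const I
      have ha2 : HasDerivAt (fun s : ℝ => L / 2 * N * s ^ 2) (L / 2 * N * (2 * t)) t := by
        have := (hasDerivAt_pow 2 t).const_mul (L / 2 * N)
        simpa [mul_comm, mul_assoc, mul_left_comm] using this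
      exact (((hasDerivAt_const t (f a)).add ha1).add ha2).congr_deriv (by ring)
    exact h2.sub hfd
  have hmono : MonotoneOn ψ (Icc (0:ℝ) 1) := by
    apply monotoneOn_of_deriv_nonneg (convex_Icc 0 1)
    · exact fun t ht => ((hψd t ht).continuousAt).continuousWithinAt
    · intro t ht
      rw [interior_Icc] at ht
      exact ((hψd t (Ioo_subset_Icc_self ht)).differentiableAt).differentiableWithinAt
    · intro t ht
      rw [interior_Icc] at ht
      rw [(hψd t (Ioo_subset_Icc_self ht)).deriv]
      have hmem : γ t ∈ U := hCU (hγC t (Ioo_subset_Icc_self ht))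
      have haU : a ∈ U := hCU ha
      have h3 : (inner ℝ (f' (γ t)) (b - a) : ℝ) - I ≤ L * t * N := by
        have h4 : (inner ℝ (f' (γ t)) (b - a) : ℝ) - I = (inner ℝ (f' (γ t) - f' a) (b - a) : ℝ) := by
          rw [inner_sub_left]
        rw [h4]
        calc (inner ℝ (f' (γ t) - f' a) (b - a) : ℝ) ≤ ‖f' (γ t) - f' a‖ * ‖b - a‖ :=
              real_inner_le_norm _ _
          _ ≤ (L * ‖γ t - a‖) * ‖b - a‖ := by
              apply mul_le_mul_of_nonneg_right (hLip _ hmem _ haU) (norm_nonneg _)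
          _ = L * t * N := by
              have : γ t - a = t • (b - a) := by simp [hγdef]
              rw [this, norm_smul, Real.norm_eq_abs, abs_of_pos ht.1, hN]
              ring
      nlinarith [ht.1.le]
  have h01 := hmono (left_mem_Icc.2 (by norm_num)) (right_mem_Icc.2 (by norm_num)) (by norm_num)
  have hψ0 : ψ 0 = 0 := by simp [hψ, hγdef]
  have hψ1 : ψ 1 = f a + I + L / 2 * N - f b := by
    have : γ 1 = b := by simp [hγdef]
    simp [hψ, this]
  rw [hψ0, hψ1] at h01
  linarith

lemma proj_vi {E : Type*} [NormedAddCommGroup E] [InnerProductSpace ℝ E]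
    (C : Set E) (hCconv : Convex ℝ C) (u v : E) (hv : v ∈ C)
    (hmin : ∀ z ∈ C, ‖v - u‖ ≤ ‖z - u‖) (w : E) (hw : w ∈ C) :
    (inner ℝ (u - v) (w - v) : ℝ) ≤ 0 := by
  have : Nonempty C := ⟨⟨v, hv⟩⟩
  have hinf : ‖u - v‖ = ⨅ z : C, ‖u - z‖ := by
    apply le_antisymm
    · apply le_ciInf
      intro z
      rw [norm_sub_rev u v, norm_sub_rev u (z:E)]
      exact hmin z z.2
    · exact ciInf_le ⟨0, fun r ⟨z, hz⟩ => hz ▸ norm_nonneg _⟩ (⟨v, hv⟩ : C)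
  exact (norm_eq_iInf_iff_real_inner_le_zero hCconv hv).1 hinf w hw
theorem stmt_12 {m : ℕ} (C : Set (EuclideanSpace ℝ (Fin m))) (hC : C.Nonempty)
    (hCcl : IsClosed C) (hCconv : Convex ℝ C)
    (f : EuclideanSpace ℝ (Fin m) → ℝ)
    (f' : EuclideanSpace ℝ (Fin m) → EuclideanSpace ℝ (Fin m))
    (U : Set (EuclideanSpace ℝ (Fin m))) (hU : IsOpen U) (hCU : C ⊆ U)
    (hf : ∀ x ∈ U, HasGradientAt f (f' x) x)
    (L : ℝ) (hL : 0 ≤ L)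
    (hLip : ∀ x ∈ U, ∀ y ∈ U, ‖f' x - f' y‖ ≤ L * ‖x - y‖)
    (σ κ : ℝ) (hσ : σ ∈ Set.Ioo (0:ℝ) 1) (hκ : κ ∈ Set.Ioo (0:ℝ) 1)
    (x : ℕ → EuclideanSpace ℝ (Fin m)) (lam : ℕ → ℝ)
    (hx0 : x 0 ∈ C) (hlam0 : 0 < lam 0)
    (hproj : ∀ k, x (k + 1) ∈ C ∧ ∀ z ∈ C,
      ‖x (k + 1) - (x k - lam k • f' (x k))‖ ≤ ‖z - (x k - lam k • f' (x k))‖)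
    (hstep : ∀ k,
      (f (x (k + 1)) ≤ f (x k) - σ * (inner ℝ (f' (x k)) (x k - x (k + 1)) : ℝ) →
        lam (k + 1) = lam k) ∧
      (¬ f (x (k + 1)) ≤ f (x k) - σ * (inner ℝ (f' (x k)) (x k - x (k + 1)) : ℝ) →
        lam (k + 1) = κ * lam k))
    :
    ∃ k₁ : ℕ, ∀ k ≥ k₁, lam k = lam k₁ := by
  obtain ⟨hσ0, hσ1⟩ := hσ
  obtain ⟨hκ0, hκ1⟩ := hκ
  have hxC : ∀ k, x k ∈ C := by
    intro k
    cases k with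
    | zero => exact hx0
    | succ n => exact (hproj n).1
  have hpos : ∀ k, 0 < lam k := by
    intro k
    induction k with
    | zero => exact hlam0
    | succ n ih =>
      by_cases hc : f (x (n + 1)) ≤ f (x n) - σ * (inner ℝ (f' (x n)) (x n - x (n + 1)) : ℝ)
      · rw [(hstep n).1 hc]; exact ih
      · rw [(hstep n).2 hc]; positivity
  have hdec : ∀ k, lam (k + 1) ≤ lam k := by
    intro k
    by_cases hc : f (x (k + 1)) ≤ f (x k) - σ * (inner ℝ (f' (x k)) (x k - x (k + 1)) : ℝ)
    · rw [(hstep k).1 hc]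
    · rw [(hstep k).2 hc]
      nlinarith [hpos k]
  have hmono : ∀ a b : ℕ, a ≤ b → lam b ≤ lam a := by
    intro a b hab
    induction hab with
    | refl => exact le_refl _
    | step h ih => exact le_trans (hdec _) ih
  have hVI : ∀ k, ‖x k - x (k + 1)‖ ^ 2 ≤
      lam k * (inner ℝ (f' (x k)) (x k - x (k + 1)) : ℝ) := by
    intro k
    have h := proj_vi C hCconv (x k - lam k • f' (x k)) (x (k + 1)) (hproj k).1
      (fun z hz => (hproj k).2 z hz) (x k) (hxC k)
    have heq : (x k - lam k • f' (x k)) - x (k + 1)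
        = (x k - x (k + 1)) - lam k • f' (x k) := by abel
    rw [heq, inner_sub_left, real_inner_smul_left,
      real_inner_self_eq_norm_sq] at h
    linarith
  have hkey : ∀ k, L * lam k ≤ 2 * (1 - σ) → lam (k + 1) = lam k := by
    intro k hk
    apply (hstep k).1
    set D : ℝ := (inner ℝ (f' (x k)) (x k - x (k + 1)) : ℝ) with hD
    have hVIk := hVI k
    have hDnn : 0 ≤ D := by nlinarith [hpos k, sq_nonneg ‖x k - x (k + 1)‖]
    have hdes := descent_lemma f f' U hU hf L hLip C hCconv hCU (x k) (x (k + 1))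
      (hxC k) (hxC (k + 1))
    have h1 : (inner ℝ (f' (x k)) (x (k + 1) - x k) : ℝ) = -D := by
      rw [show x (k + 1) - x k = -(x k - x (k + 1)) by abel, inner_neg_right, hD]
    have h2 : ‖x (k + 1) - x k‖ = ‖x k - x (k + 1)‖ := norm_sub_rev _ _
    rw [h1, h2] at hdes
    nlinarith [hpos k, mul_le_mul_of_nonneg_left hVIk hL]
  have hstab : ∀ k, L * lam k ≤ 2 * (1 - σ) → ∀ j, lam (k + j) = lam k := by
    intro k hk j
    induction j with
    | zero => rfl
    | succ n ih =>
      have : lam (k + n) = lam k := ih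
      calc lam (k + (n + 1)) = lam ((k + n) + 1) := by ring_nf
        _ = lam (k + n) := hkey (k + n) (by rw [this]; exact hk)
        _ = lam k := ih
  by_cases hthr : ∃ k, L * lam k ≤ 2 * (1 - σ)
  · obtain ⟨k, hk⟩ := hthr
    refine ⟨k, fun j hj => ?_⟩
    have := hstab k hk (j - k)
    rwa [Nat.add_sub_cancel' hj] at this
  · push_neg at hthr
    have hL0 : 0 < L := by nlinarith [hthr 0, hpos 0]
    have hck : ∀ k, 2 * (1 - σ) / L < lam k := by
      intro k
      rw [div_lt_iff₀ hL0]
      nlinarith [hthr k]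
    by_cases hS : ∃ N, ∀ k ≥ N, lam (k + 1) = lam k
    · obtain ⟨N, hN⟩ := hS
      refine ⟨N, fun k hk => ?_⟩
      induction k, hk using Nat.le_induction with
      | base => rfl
      | succ n hn ih => rw [hN n hn, ih]
    · push_neg at hS
      have hfail : ∀ N, ∃ k ≥ N, lam (k + 1) = κ * lam k := by
        intro N
        obtain ⟨k, hk1, hk2⟩ := hS N
        refine ⟨k, hk1, ?_⟩
        by_cases hc : f (x (k + 1)) ≤ f (x k) - σ * (inner ℝ (f' (x k)) (x k - x (k + 1)) : ℝ)
        · exact absurd ((hstep k).1 hc) hk2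
        · exact (hstep k).2 hc
      choose J hJ1 hJ2 using hfail
      set j : ℕ → ℕ := fun n => Nat.rec (J 0) (fun _ prev => J (prev + 1)) n with hj
      have hbound : ∀ n, lam (j n + 1) ≤ κ ^ (n + 1) * lam 0 := by
        intro n
        induction n with
        | zero =>
          have : lam (j 0 + 1) = κ * lam (J 0) := hJ2 0
          rw [this, pow_one]
          exact mul_le_mul_of_nonneg_left (hmono 0 (J 0) (Nat.zero_le _)) hκ0.le
        | succ n ih =>
          have hjs : j (n + 1) = J (j n + 1) := rfl
          have h1 : lam (j (n + 1) + 1) = κ * lam (J (j n + 1)) := by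
            rw [hjs]; exact hJ2 (j n + 1)
          have h2 : lam (J (j n + 1)) ≤ lam (j n + 1) :=
            hmono _ _ (hJ1 (j n + 1))
          calc lam (j (n + 1) + 1) = κ * lam (J (j n + 1)) := h1
            _ ≤ κ * lam (j n + 1) := by nlinarith
            _ ≤ κ * (κ ^ (n + 1) * lam 0) := by nlinarith
            _ = κ ^ (n + 2) * lam 0 := by ring
      have hc0 : (0:ℝ) < 2 * (1 - σ) / L := div_pos (by linarith) hL0
      obtain ⟨n, hn⟩ := exists_pow_lt_of_lt_one (div_pos hc0 hlam0) hκ1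
      have h1 := hbound n
      have h2 := hck (j n + 1)
      have h3 : κ ^ (n + 1) ≤ κ ^ n := by
        have h5 := pow_pos hκ0 n
        rw [pow_succ]
        nlinarith
      have h4 : κ ^ n * lam 0 < 2 * (1 - σ) / L := by
        rwa [lt_div_iff₀ hlam0] at hn
      nlinarith [hlam0]
end

section
/- Every limit point of the sequence {x^k} generated by Algorithm GDA is a stationary point of the problem min_{x∈C} f(x), i.e., if x̄ is a limit point then ⟨∇f(x̄), z − x̄⟩ ≥ 0 for all z ∈ C. -/
set_option maxHeartbeats 1000000 in
theorem stmt_14 {m : ℕ} (C : Set (EuclideanSpace ℝ (Fin m))) (hC : C.Nonempty)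
    (hCcl : IsClosed C) (hCconv : Convex ℝ C)
    (f : EuclideanSpace ℝ (Fin m) → ℝ)
    (f' : EuclideanSpace ℝ (Fin m) → EuclideanSpace ℝ (Fin m))
    (U : Set (EuclideanSpace ℝ (Fin m))) (hU : IsOpen U) (hCU : C ⊆ U)
    (hf : ∀ x ∈ U, HasGradientAt f (f' x) x)
    (L : ℝ) (hL : 0 ≤ L)
    (hLip : ∀ x ∈ U, ∀ y ∈ U, ‖f' x - f' y‖ ≤ L * ‖x - y‖)
    (σ κ : ℝ) (hσ : σ ∈ Set.Ioo (0:ℝ) 1) (hκ : κ ∈ Set.Ioo (0:ℝ) 1)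
    (x : ℕ → EuclideanSpace ℝ (Fin m)) (lam : ℕ → ℝ)
    (hx0 : x 0 ∈ C) (hlam0 : 0 < lam 0)
    (hproj : ∀ k, x (k + 1) ∈ C ∧ ∀ z ∈ C,
      ‖x (k + 1) - (x k - lam k • f' (x k))‖ ≤ ‖z - (x k - lam k • f' (x k))‖)
    (hstep : ∀ k,
      (f (x (k + 1)) ≤ f (x k) - σ * (inner ℝ (f' (x k)) (x k - x (k + 1)) : ℝ) →
        lam (k + 1) = lam k) ∧
      (¬ f (x (k + 1)) ≤ f (x k) - σ * (inner ℝ (f' (x k)) (x k - x (k + 1)) : ℝ) →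
        lam (k + 1) = κ * lam k))
    (hsol : ∃ xs ∈ C, ∀ z ∈ C, f xs ≤ f z) :
    ∀ xb : EuclideanSpace ℝ (Fin m),
      (∃ φ : ℕ → ℕ, StrictMono φ ∧
        Filter.Tendsto (fun i => x (φ i)) Filter.atTop (nhds xb)) →
      ∀ z ∈ C, 0 ≤ (inner ℝ (f' xb) (z - xb) : ℝ) := by
  obtain ⟨hσ0, hσ1⟩ := hσ
  obtain ⟨hκ0, hκ1⟩ := hκ
  -- all iterates in C
  have xC : ∀ k, x k ∈ C := by
    intro k
    induction k with
    | zero => exact hx0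
    | succ n _ => exact (hproj n).1
  -- lam positive
  have lam_succ : ∀ k, lam (k + 1) = lam k ∨ lam (k + 1) = κ * lam k := by
    intro k
    by_cases h : f (x (k + 1)) ≤ f (x k) - σ * (inner ℝ (f' (x k)) (x k - x (k + 1)) : ℝ)
    · exact Or.inl ((hstep k).1 h)
    · exact Or.inr ((hstep k).2 h)
  have lam_pos : ∀ k, 0 < lam k := by
    intro k
    induction k with
    | zero => exact hlam0
    | succ n ih =>
      rcases lam_succ n with h | h
      · rw [h]; exact ih
      · rw [h]; exact mul_pos hκ0 ih
  have lam_mono : ∀ k, lam (k + 1) ≤ lam k := by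
    intro k
    rcases lam_succ k with h | h
    · rw [h]
    · rw [h]
      nlinarith [lam_pos k]
  have lam_anti : Antitone lam := antitone_nat_of_succ_le lam_mono
  -- variational inequality of projection
  have hVI : ∀ k, ∀ z ∈ C,
      (inner ℝ ((x k - lam k • f' (x k)) - x (k + 1)) (z - x (k + 1)) : ℝ) ≤ 0 := by
    intro k z hz
    set u := x k - lam k • f' (x k) with hu
    have hmem := (hproj k).1
    haveI : Nonempty C := ⟨⟨x (k + 1), hmem⟩⟩
    have hbdd : BddBelow (Set.range fun w : C => ‖u - w‖) := by
      refine ⟨0, ?_⟩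
      rintro r ⟨w, rfl⟩
      exact norm_nonneg _
    have hinf : ‖u - x (k + 1)‖ = ⨅ w : C, ‖u - w‖ := by
      apply le_antisymm
      · apply le_ciInf
        intro w
        rw [norm_sub_rev, norm_sub_rev u]
        exact (hproj k).2 w w.2
      · exact ciInf_le hbdd ⟨x (k + 1), hmem⟩
    exact (norm_eq_iInf_iff_real_inner_le_zero hCconv hmem).1 hinf z hz
  -- key inequality
  have key : ∀ k, ‖x (k + 1) - x k‖ ^ 2 ≤
      lam k * (inner ℝ (f' (x k)) (x k - x (k + 1)) : ℝ) := by
    intro k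
    have h := hVI k (x k) (xC k)
    have hexp : (x k - lam k • f' (x k)) - x (k + 1)
        = (x k - x (k + 1)) - lam k • f' (x k) := by abel
    rw [hexp, inner_sub_left, real_inner_smul_left] at h
    rw [norm_sub_rev]
    have := real_inner_self_eq_norm_sq (x k - x (k + 1))
    nlinarith [h, this]
  have D_nonneg : ∀ k, 0 ≤ (inner ℝ (f' (x k)) (x k - x (k + 1)) : ℝ) := by
    intro k
    nlinarith [key k, lam_pos k, sq_nonneg ‖x (k + 1) - x k‖]
  -- descent lemma (with constant L instead of L/2, via MVT)
  have descent : ∀ a ∈ C, ∀ b ∈ C,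
      f b ≤ f a + (inner ℝ (f' a) (b - a) : ℝ) + L * ‖b - a‖ ^ 2 := by
    intro a ha b hb
    set v := b - a with hv
    set c : ℝ → EuclideanSpace ℝ (Fin m) := fun t => a + t • v with hc
    have hcd : ∀ t : ℝ, HasDerivAt c v t := by
      intro t
      simpa [hc] using ((hasDerivAt_id t).smul_const v).const_add a
    have hmem : ∀ t ∈ Set.Icc (0:ℝ) 1, c t ∈ C := by
      intro t ht
      exact hCconv.add_smul_sub_mem ha hb ht
    have hderiv : ∀ t ∈ Set.Icc (0:ℝ) 1,
        HasDerivAt (f ∘ c) (inner ℝ (f' (c t)) v : ℝ) t := by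
      intro t ht
      have hUt : c t ∈ U := hCU (hmem t ht)
      have hfd := (hf _ hUt).hasFDerivAt
      have := hfd.comp_hasDerivAt t (hcd t)
      simpa using this
    have hcont : ContinuousOn (f ∘ c) (Set.Icc 0 1) := by
      intro t ht
      exact (hderiv t ht).continuousAt.continuousWithinAt
    obtain ⟨t, ht, hslope⟩ := exists_hasDerivAt_eq_slope (f ∘ c)
      (fun t => (inner ℝ (f' (c t)) v : ℝ)) one_pos hcont
      (fun t ht => hderiv t (Set.mem_Icc_of_Ioo ht))
    have hc1 : c 1 = b := by simp [hc, hv]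
    have hc0 : c 0 = a := by simp [hc]
    have heq : f b - f a = (inner ℝ (f' (c t)) v : ℝ) := by
      rw [hslope]
      simp [hc1, hc0]
    have hsplit : (inner ℝ (f' (c t)) v : ℝ)
        = (inner ℝ (f' a) v : ℝ) + (inner ℝ (f' (c t) - f' a) v : ℝ) := by
      rw [inner_sub_left]; ring
    have hbound : (inner ℝ (f' (c t) - f' a) v : ℝ) ≤ L * ‖v‖ ^ 2 := by
      have h1 : (inner ℝ (f' (c t) - f' a) v : ℝ) ≤ ‖f' (c t) - f' a‖ * ‖v‖ :=
        real_inner_le_norm _ _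
      have h2 : ‖f' (c t) - f' a‖ ≤ L * ‖c t - a‖ :=
        hLip _ (hCU (hmem t (Set.mem_Icc_of_Ioo ht))) _ (hCU ha)
      have h3 : ‖c t - a‖ ≤ ‖v‖ := by
        have : c t - a = t • v := by simp [hc]
        rw [this, norm_smul]
        have ht0 : (0:ℝ) ≤ t := le_of_lt ht.1
        have ht1 : t ≤ 1 := le_of_lt ht.2
        rw [Real.norm_eq_abs, abs_of_nonneg ht0]
        nlinarith [norm_nonneg v]
      have h4 : ‖f' (c t) - f' a‖ * ‖v‖ ≤ (L * ‖c t - a‖) * ‖v‖ :=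
        mul_le_mul_of_nonneg_right h2 (norm_nonneg v)
      have h5 : L * ‖v‖ * ‖c t - a‖ ≤ L * ‖v‖ * ‖v‖ :=
        mul_le_mul_of_nonneg_left h3 (mul_nonneg hL (norm_nonneg v))
      nlinarith [norm_nonneg v]
    nlinarith [heq, hsplit, hbound]
  -- if L * lam k ≤ 1 - σ then the test passes at k
  have test_pass : ∀ k, L * lam k ≤ 1 - σ →
      f (x (k + 1)) ≤ f (x k) - σ * (inner ℝ (f' (x k)) (x k - x (k + 1)) : ℝ) := by
    intro k hk
    have hd := descent (x k) (xC k) (x (k + 1)) (xC (k + 1))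
    have hinner : (inner ℝ (f' (x k)) (x (k + 1) - x k) : ℝ)
        = -(inner ℝ (f' (x k)) (x k - x (k + 1)) : ℝ) := by
      rw [← inner_neg_right]
      congr 1
      abel
    rw [hinner] at hd
    have hk2 := key k
    have hD := D_nonneg k
    nlinarith [mul_le_mul_of_nonneg_left hk2 hL, mul_le_mul_of_nonneg_right hk hD]
  -- once small, lam stays constant and tests pass
  have stable : ∀ N, L * lam N ≤ 1 - σ → ∀ j, lam (N + j) = lam N := by
    intro N hN j
    induction j with
    | zero => rfl
    | succ n ih =>
      have hpass := test_pass (N + n) (by rw [ih]; exact hN)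
      have := (hstep (N + n)).1 hpass
      rw [show N + (n + 1) = (N + n) + 1 from rfl, this, ih]
    
  -- there is N from which the test always passes
  have pass_forever : ∀ N, L * lam N ≤ 1 - σ → ∀ k, N ≤ k →
      f (x (k + 1)) ≤ f (x k) - σ * (inner ℝ (f' (x k)) (x k - x (k + 1)) : ℝ) := by
    intro N hN k hk
    obtain ⟨j, rfl⟩ := Nat.exists_eq_add_of_le hk
    have := stable N hN j
    exact test_pass (N + j) (by rw [this]; exact hN)
  have exN : ∃ N, ∀ k, N ≤ k →
      f (x (k + 1)) ≤ f (x k) - σ * (inner ℝ (f' (x k)) (x k - x (k + 1)) : ℝ) := by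
    have claim : ∀ j, ∃ N, (∀ k, N ≤ k →
        f (x (k + 1)) ≤ f (x k) - σ * (inner ℝ (f' (x k)) (x k - x (k + 1)) : ℝ)) ∨
        lam N ≤ κ ^ j * lam 0 := by
      intro j
      induction j with
      | zero => exact ⟨0, Or.inr (by simp)⟩
      | succ n ih =>
        obtain ⟨N, hN⟩ := ih
        rcases hN with hN | hN
        · exact ⟨N, Or.inl hN⟩
        · by_cases hall : ∀ k, N ≤ k →
              f (x (k + 1)) ≤ f (x k) - σ * (inner ℝ (f' (x k)) (x k - x (k + 1)) : ℝ)
          · exact ⟨N, Or.inl hall⟩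
          · push_neg at hall
            obtain ⟨k, hkN, hkfail⟩ := hall
            refine ⟨k + 1, Or.inr ?_⟩
            have h1 : lam (k + 1) = κ * lam k := (hstep k).2 (not_le.2 hkfail)
            have h2 : lam k ≤ lam N := lam_anti hkN
            calc lam (k + 1) = κ * lam k := h1
              _ ≤ κ * (κ ^ n * lam 0) := by nlinarith
              _ = κ ^ (n + 1) * lam 0 := by ring
    obtain ⟨j, hj⟩ : ∃ j, L * (κ ^ j * lam 0) ≤ 1 - σ := by
      rcases eq_or_lt_of_le hL with h0 | hLpos
      · exact ⟨0, by rw [← h0]; simp; linarith⟩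
      · obtain ⟨j, hj⟩ := exists_pow_lt_of_lt_one
          (div_pos (by linarith : (0:ℝ) < 1 - σ) (mul_pos hLpos hlam0)) hκ1
        refine ⟨j, ?_⟩
        rw [lt_div_iff₀ (mul_pos hLpos hlam0)] at hj
        nlinarith
    obtain ⟨N, hN⟩ := claim j
    rcases hN with hN | hN
    · exact ⟨N, hN⟩
    · refine ⟨N, pass_forever N ?_⟩
      calc L * lam N ≤ L * (κ ^ j * lam 0) := mul_le_mul_of_nonneg_left hN hL
        _ ≤ 1 - σ := hj
  obtain ⟨N, hN⟩ := exN
  have lam_const : ∀ k, N ≤ k → lam k = lam N := by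
    have aux : ∀ j, lam (N + j) = lam N := by
      intro j
      induction j with
      | zero => rfl
      | succ n ih =>
        have := (hstep (N + n)).1 (hN (N + n) (Nat.le_add_right _ _))
        rw [show N + (n + 1) = (N + n) + 1 from rfl, this, ih]
    intro k hk
    obtain ⟨j, rfl⟩ := Nat.exists_eq_add_of_le hk
    exact aux j
  -- convergence of step norms to zero
  obtain ⟨xs, hxs, hxsmin⟩ := hsol
  set G : ℕ → ℝ := fun k => f (x (k + N)) with hG
  have Ganti : Antitone G := by
    apply antitone_nat_of_succ_le
    intro k
    have h := hN (k + N) (Nat.le_add_left _ _)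
    have hD := D_nonneg (k + N)
    have hidx : k + 1 + N = (k + N) + 1 := by omega
    simp only [hG, hidx]
    nlinarith
  have Gbdd : BddBelow (Set.range G) := by
    refine ⟨f xs, ?_⟩
    rintro r ⟨k, rfl⟩
    exact hxsmin _ (xC _)
  have hGt : Filter.Tendsto G Filter.atTop (nhds (⨅ k, G k)) :=
    tendsto_atTop_ciInf Ganti Gbdd
  have hGt1 : Filter.Tendsto (fun k => G (k + 1)) Filter.atTop (nhds (⨅ k, G k)) :=
    (Filter.tendsto_add_atTop_iff_nat 1).2 hGt
  have hdiff : Filter.Tendsto (fun k => G k - G (k + 1)) Filter.atTop (nhds 0) := by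
    simpa using hGt.sub hGt1
  have hD0 : Filter.Tendsto
      (fun k => (inner ℝ (f' (x (k + N))) (x (k + N) - x (k + N + 1)) : ℝ))
      Filter.atTop (nhds 0) := by
    apply squeeze_zero (fun k => D_nonneg _) (fun k => ?_)
      (g := fun k => (G k - G (k + 1)) / σ)
    · simpa using hdiff.div_const σ
    · have h := hN (k + N) (Nat.le_add_left _ _)
      have hidx : k + 1 + N = (k + N) + 1 := by omega
      rw [le_div_iff₀ hσ0]
      simp only [hG, hidx]
      linarith
  have hsq : Filter.Tendsto (fun k => ‖x (k + N + 1) - x (k + N)‖ ^ 2)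
      Filter.atTop (nhds 0) := by
    apply squeeze_zero (fun k => sq_nonneg _) (fun k => ?_)
      (g := fun k => lam N * (inner ℝ (f' (x (k + N))) (x (k + N) - x (k + N + 1)) : ℝ))
    · simpa using hD0.const_mul (lam N)
    · have := key (k + N)
      rwa [lam_const (k + N) (Nat.le_add_left _ _)] at this
  have hnrm : Filter.Tendsto (fun k => ‖x (k + N + 1) - x (k + N)‖)
      Filter.atTop (nhds 0) := by
    have := hsq.sqrt
    simp only [Real.sqrt_sq (norm_nonneg _), Real.sqrt_zero] at this
    exact this
  have hfull : Filter.Tendsto (fun k => ‖x (k + 1) - x k‖) Filter.atTop (nhds 0) :=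
    (Filter.tendsto_add_atTop_iff_nat N).1 hnrm
  have hstep0 : Filter.Tendsto (fun k => x (k + 1) - x k) Filter.atTop (nhds 0) :=
    tendsto_zero_iff_norm_tendsto_zero.2 hfull
  -- final limit argument
  rintro xb ⟨φ, hφ, hconv⟩ z hz
  have hφtop : Filter.Tendsto φ Filter.atTop Filter.atTop := hφ.tendsto_atTop
  have h1 : Filter.Tendsto (fun i => x (φ i + 1) - x (φ i)) Filter.atTop (nhds 0) :=
    hstep0.comp hφtop
  have hconv1 : Filter.Tendsto (fun i => x (φ i + 1)) Filter.atTop (nhds xb) := by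
    have := h1.add hconv
    simpa using this
  have xbC : xb ∈ C := hCcl.mem_of_tendsto hconv
    (Filter.Eventually.of_forall fun i => xC _)
  have hgrad : Filter.Tendsto (fun i => f' (x (φ i))) Filter.atTop (nhds (f' xb)) := by
    rw [tendsto_iff_norm_sub_tendsto_zero]
    apply squeeze_zero (fun i => norm_nonneg _)
      (fun i => hLip _ (hCU (xC _)) _ (hCU xbC))
      (g := fun i => L * ‖x (φ i) - xb‖)
    have hxconv : Filter.Tendsto (fun i => ‖x (φ i) - xb‖) Filter.atTop (nhds 0) :=
      tendsto_iff_norm_sub_tendsto_zero.1 hconv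
    simpa using hxconv.const_mul L
  have hE : Filter.Tendsto
      (fun i => (inner ℝ (x (φ i + 1) - x (φ i) + lam N • f' (x (φ i)))
        (z - x (φ i + 1)) : ℝ))
      Filter.atTop (nhds (inner ℝ ((0 : EuclideanSpace ℝ (Fin m)) + lam N • f' xb) (z - xb) : ℝ)) :=
    Filter.Tendsto.inner (h1.add (hgrad.const_smul (lam N)))
      (tendsto_const_nhds.sub hconv1)
  have hEnn : ∀ᶠ i in Filter.atTop, 0 ≤
      (inner ℝ (x (φ i + 1) - x (φ i) + lam N • f' (x (φ i))) (z - x (φ i + 1)) : ℝ) := by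
    rw [Filter.eventually_atTop]
    refine ⟨N, fun i hi => ?_⟩
    have hlami : lam (φ i) = lam N := lam_const _ (le_trans hi hφ.le_apply)
    have h := hVI (φ i) z hz
    have hre : x (φ i) - lam (φ i) • f' (x (φ i)) - x (φ i + 1)
        = -(x (φ i + 1) - x (φ i) + lam (φ i) • f' (x (φ i))) := by abel
    rw [hre, inner_neg_left] at h
    rw [← hlami]
    linarith
  have hfinal : 0 ≤ (inner ℝ ((0 : EuclideanSpace ℝ (Fin m)) + lam N • f' xb) (z - xb) : ℝ) :=
    ge_of_tendsto hE hEnn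
  rw [zero_add, real_inner_smul_left] at hfinal
  by_contra hcon
  push_neg at hcon
  nlinarith [lam_pos N, mul_pos (lam_pos N) (neg_pos.2 hcon)]
end

section
/- If f is quasiconvex on C, then the sequence {x^k} generated by Algorithm GDA converges to a stationary point of min_{x∈C} f(x). -/
open RealInnerProductSpace

variable {E : Type*} [NormedAddCommGroup E] [InnerProductSpace ℝ E] [CompleteSpace E]

/-- Projection variational inequality. -/
lemma gda_proj_vi {K : Set E} (hK : Convex ℝ K) {u v : E} (hv : v ∈ K)
    (hmin : ∀ w ∈ K, ‖v - u‖ ≤ ‖w - u‖) : ∀ w ∈ K, ⟪u - v, w - v⟫ ≤ 0 := by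
  have : Nonempty K := ⟨⟨v, hv⟩⟩
  rw [← norm_eq_iInf_iff_real_inner_le_zero hK hv]
  apply le_antisymm
  · apply le_ciInf
    intro w
    rw [norm_sub_rev u v, norm_sub_rev u w]
    exact hmin w w.2
  · have hbdd : BddBelow (Set.range fun w : K => ‖u - (w : E)‖) :=
      ⟨0, by rintro r ⟨w, rfl⟩; exact norm_nonneg _⟩
    exact ciInf_le hbdd ⟨v, hv⟩

/-- Descent-type lemma (with constant L instead of L/2). -/
lemma gda_descent {U : Set E} {f : E → ℝ} {g : E → E}
    (hf : ∀ x ∈ U, HasGradientAt f (g x) x) {L : ℝ} (hL : 0 ≤ L)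
    (hLip : ∀ x ∈ U, ∀ y ∈ U, ‖g x - g y‖ ≤ L * ‖x - y‖)
    {a b : E} (hseg : segment ℝ a b ⊆ U) :
    f b ≤ f a + ⟪g a, b - a⟫ + L * ‖b - a‖ ^ 2 := by
  set h : E → ℝ := fun z => f z - ⟪g a, z⟫ with hh
  have ha : a ∈ segment ℝ a b := left_mem_segment ℝ a b
  have hb : b ∈ segment ℝ a b := right_mem_segment ℝ a b
  have key : ‖h b - h a‖ ≤ (L * ‖b - a‖) * ‖b - a‖ := by
    apply Convex.norm_image_sub_le_of_norm_hasFDerivWithin_le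
      (f' := fun z => (InnerProductSpace.toDual ℝ E) (g z) - (InnerProductSpace.toDual ℝ E) (g a))
      (fun z hz => ?_) (fun z hz => ?_) (convex_segment a b) ha hb
    · exact (((hf z (hseg hz)).hasFDerivAt.sub
        ((InnerProductSpace.toDual ℝ E (g a)).hasFDerivAt)).hasFDerivWithinAt).congr_fderiv
        (by ext w; simp [InnerProductSpace.toDual_apply_apply])
    · beta_reduce
      rw [← map_sub, (InnerProductSpace.toDual ℝ E).norm_map]
      have h1 : ‖g z - g a‖ ≤ L * ‖z - a‖ := hLip z (hseg hz) a (hseg ha)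
      have h2 : ‖z - a‖ ≤ ‖b - a‖ := by
        obtain ⟨s, t, hs, ht, hst, rfl⟩ := hz
        have : s • a + t • b - a = t • (b - a) := by
          rw [smul_sub]
          have hsa : s • a = a - t • a := by
            rw [show s = 1 - t by linarith, sub_smul, one_smul]
          rw [hsa]; abel
        rw [this, norm_smul, Real.norm_eq_abs, abs_of_nonneg ht]
        nlinarith [norm_nonneg (b - a)]
      calc ‖g z - g a‖ ≤ L * ‖z - a‖ := h1
        _ ≤ L * ‖b - a‖ := by nlinarith
  have h2 : h b - h a ≤ L * ‖b - a‖ ^ 2 := by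
    have := (abs_le.mp (by rwa [Real.norm_eq_abs] at key)).2
    nlinarith
  have h3 : h b - h a = f b - f a - ⟪g a, b - a⟫ := by
    simp only [hh, inner_sub_right]; ring
  linarith [h3 ▸ h2]

/-- First-order characterization from quasiconvexity. -/
lemma gda_quasi {C : Set E} {f : E → ℝ} {g : E → E}
    (hquasi : ∀ u ∈ C, ∀ v ∈ C, ∀ l ∈ Set.Icc (0:ℝ) 1,
      f (l • u + (1 - l) • v) ≤ max (f u) (f v))
    {a b : E} (ha : a ∈ C) (hb : b ∈ C) (hgrad : HasGradientAt f (g a) a)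
    (hfb : f b ≤ f a) : ⟪g a, b - a⟫ ≤ 0 := by
  set c : ℝ → E := fun t => a + t • (b - a) with hc
  have hderiv : HasDerivAt (fun t => f (c t)) ⟪g a, b - a⟫ 0 := by
    have hc' : HasDerivAt c (b - a) 0 := by
      have : HasDerivAt (fun t : ℝ => t • (b - a)) ((1:ℝ) • (b - a)) 0 :=
        (hasDerivAt_id (0:ℝ)).smul_const (b - a)
      simpa only [one_smul] using this.const_add a
    have hca : c 0 = a := by simp [hc]
    have hg : HasFDerivAt f ((InnerProductSpace.toDual ℝ E) (g a)) (c 0) := by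
      rw [hca]; exact hgrad.hasFDerivAt
    have := hg.comp_hasDerivAt 0 hc'
    simp only [InnerProductSpace.toDual_apply_apply] at this
    exact this
  have hslope : Filter.Tendsto (slope (fun t => f (c t)) 0) (nhdsWithin 0 {(0:ℝ)}ᶜ)
      (nhds ⟪g a, b - a⟫) := hasDerivAt_iff_tendsto_slope.mp hderiv
  have hslope' : Filter.Tendsto (slope (fun t => f (c t)) 0) (nhdsWithin 0 (Set.Ioi 0))
      (nhds ⟪g a, b - a⟫) :=
    hslope.mono_left (nhdsWithin_mono 0 (fun t ht => ne_of_gt ht))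
  refine le_of_tendsto hslope' ?_
  filter_upwards [Ioo_mem_nhdsGT_of_mem (Set.mem_Ico.mpr ⟨le_refl 0, one_pos⟩)] with t ht
  rcases ht with ⟨ht0, ht1⟩
  have hmem : c t = t • b + (1 - t) • a := by
    simp only [hc, smul_sub, sub_smul, one_smul]; abel
  have hle : f (c t) ≤ f a := by
    rw [hmem]
    calc f (t • b + (1 - t) • a) ≤ max (f b) (f a) :=
          hquasi b hb a ha t ⟨le_of_lt ht0, le_of_lt ht1⟩
      _ = f a := max_eq_right hfb
  rw [slope_def_field]
  have hc0 : c 0 = a := by simp [hc]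
  rw [hc0]
  apply div_nonpos_of_nonpos_of_nonneg <;> [linarith; simp [ht0.le]]
set_option maxHeartbeats 1000000 in
theorem stmt_15 {m : ℕ} (C : Set (EuclideanSpace ℝ (Fin m))) (hC : C.Nonempty)
    (hCcl : IsClosed C) (hCconv : Convex ℝ C)
    (f : EuclideanSpace ℝ (Fin m) → ℝ)
    (f' : EuclideanSpace ℝ (Fin m) → EuclideanSpace ℝ (Fin m))
    (U : Set (EuclideanSpace ℝ (Fin m))) (hU : IsOpen U) (hCU : C ⊆ U)
    (hf : ∀ x ∈ U, HasGradientAt f (f' x) x)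
    (L : ℝ) (hL : 0 ≤ L)
    (hLip : ∀ x ∈ U, ∀ y ∈ U, ‖f' x - f' y‖ ≤ L * ‖x - y‖)
    (σ κ : ℝ) (hσ : σ ∈ Set.Ioo (0:ℝ) 1) (hκ : κ ∈ Set.Ioo (0:ℝ) 1)
    (x : ℕ → EuclideanSpace ℝ (Fin m)) (lam : ℕ → ℝ)
    (hx0 : x 0 ∈ C) (hlam0 : 0 < lam 0)
    (hproj : ∀ k, x (k + 1) ∈ C ∧ ∀ z ∈ C,
      ‖x (k + 1) - (x k - lam k • f' (x k))‖ ≤ ‖z - (x k - lam k • f' (x k))‖)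
    (hstep : ∀ k,
      (f (x (k + 1)) ≤ f (x k) - σ * (inner ℝ (f' (x k)) (x k - x (k + 1)) : ℝ) →
        lam (k + 1) = lam k) ∧
      (¬ f (x (k + 1)) ≤ f (x k) - σ * (inner ℝ (f' (x k)) (x k - x (k + 1)) : ℝ) →
        lam (k + 1) = κ * lam k))
    (hsol : ∃ xs ∈ C, ∀ z ∈ C, f xs ≤ f z)
    (hquasi : ∀ u ∈ C, ∀ v ∈ C, ∀ l ∈ Set.Icc (0:ℝ) 1,
      f (l • u + (1 - l) • v) ≤ max (f u) (f v)) :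
    ∃ xb ∈ C, Filter.Tendsto x Filter.atTop (nhds xb) ∧
      ∀ z ∈ C, 0 ≤ (inner ℝ (f' xb) (z - xb) : ℝ) := by
  classical
  obtain ⟨hσ0, hσ1⟩ := hσ
  obtain ⟨hκ0, hκ1⟩ := hκ
  obtain ⟨xs, hxs, hxsmin⟩ := hsol
  -- notation
  set Q : ℕ → Prop := fun k =>
    f (x (k + 1)) ≤ f (x k) - σ * (inner ℝ (f' (x k)) (x k - x (k + 1)) : ℝ) with hQdef
  -- membership
  have inC : ∀ k, x k ∈ C := by
    intro k; cases k with
    | zero => exact hx0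
    | succ k => exact (hproj k).1
  have inU : ∀ k, x k ∈ U := fun k => hCU (inC k)
  -- projection variational inequality
  have vi : ∀ k, ∀ w ∈ C,
      ⟪(x k - lam k • f' (x k)) - x (k+1), w - x (k+1)⟫ ≤ 0 := by
    intro k
    exact gda_proj_vi hCconv (hproj k).1 (fun w hw => (hproj k).2 w hw)
  -- positivity of lam
  have lampos : ∀ k, 0 < lam k := by
    intro k; induction k with
    | zero => exact hlam0
    | succ k ih =>
      by_cases h : Q k
      · rw [(hstep k).1 h]; exact ih
      · rw [(hstep k).2 h]; positivity
  have lamanti : Antitone lam := by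
    apply antitone_nat_of_succ_le
    intro k
    by_cases h : Q k
    · rw [(hstep k).1 h]
    · rw [(hstep k).2 h]; nlinarith [lampos k]
  -- key inequality
  have key : ∀ k, ‖x k - x (k+1)‖^2 ≤ lam k * ⟪f' (x k), x k - x (k+1)⟫ := by
    intro k
    have h := vi k (x k) (inC k)
    rw [show (x k - lam k • f' (x k)) - x (k+1)
        = (x k - x (k+1)) - lam k • f' (x k) by abel] at h
    rw [inner_sub_left, real_inner_smul_left, real_inner_self_eq_norm_sq] at h
    linarith
  have gd0 : ∀ k, 0 ≤ ⟪f' (x k), x k - x (k+1)⟫ := by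
    intro k
    by_contra h
    push_neg at h
    nlinarith [key k, lampos k, sq_nonneg ‖x k - x (k+1)‖]
  -- sufficient decrease when the step-size is small
  have testpass : ∀ k, lam k * L ≤ 1 - σ → Q k := by
    intro k hk
    have hd := gda_descent hf hL hLip (a := x k) (b := x (k+1))
      ((hCconv.segment_subset (inC k) (inC (k+1))).trans hCU)
    have h1 : ⟪f' (x k), x (k+1) - x k⟫ = -⟪f' (x k), x k - x (k+1)⟫ := by
      rw [← inner_neg_right]; congr 1; abel
    have h2 : ‖x (k+1) - x k‖ = ‖x k - x (k+1)‖ := norm_sub_rev _ _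
    rw [h1, h2] at hd
    show f (x (k + 1)) ≤ f (x k) - σ * ⟪f' (x k), x k - x (k+1)⟫
    nlinarith [mul_le_mul_of_nonneg_left (key k) hL,
      mul_le_mul_of_nonneg_right hk (gd0 k)]
  -- eventually Q always holds
  have hA : ∃ N, ∀ k, N ≤ k → Q k := by
    rcases hL.eq_or_lt with hL0 | hLpos
    · exact ⟨0, fun k _ => testpass k (by rw [← hL0, mul_zero]; linarith)⟩
    · by_contra hA
      push_neg at hA
      have hsmall : ∀ n, ∃ k, lam k ≤ κ^n * lam 0 := by
        intro n; induction n with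
        | zero => exact ⟨0, by simp⟩
        | succ n ih =>
          obtain ⟨k, hk⟩ := ih
          obtain ⟨j, hjk, hQj⟩ := hA k
          refine ⟨j+1, ?_⟩
          rw [(hstep j).2 hQj]
          have hjl := lamanti hjk
          calc κ * lam j ≤ κ * (κ^n * lam 0) := by nlinarith
            _ = κ^(n+1) * lam 0 := by ring
      have htend : Filter.Tendsto (fun n => κ^n * lam 0) Filter.atTop (nhds 0) := by
        simpa using (tendsto_pow_atTop_nhds_zero_of_lt_one hκ0.le hκ1).mul_const (lam 0)
      obtain ⟨n, hn⟩ := (htend.eventually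
        (gt_mem_nhds (show (0:ℝ) < (1-σ)/L from div_pos (by linarith) hLpos))).exists
      obtain ⟨k, hk⟩ := hsmall n
      have hthresh : lam k * L ≤ 1 - σ := by
        have h1 : lam k < (1-σ)/L := lt_of_le_of_lt hk hn
        exact le_of_lt ((lt_div_iff₀ hLpos).mp h1)
      have hlameq : ∀ j, lam (k + j) = lam k := by
        intro j; induction j with
        | zero => rfl
        | succ j ih =>
          have hQ : Q (k+j) := testpass _ (by rw [ih]; exact hthresh)
          rw [show k + (j+1) = (k+j)+1 from rfl, (hstep (k+j)).1 hQ, ih]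
      obtain ⟨j, hjk, hQj⟩ := hA k
      refine hQj ?_
      have := testpass (k + (j - k)) (by rw [hlameq (j-k)]; exact hthresh)
      rwa [Nat.add_sub_cancel' hjk] at this
  obtain ⟨N, hN⟩ := hA
  -- lam is eventually constant
  have lamconst : ∀ j, lam (N + j) = lam N := by
    intro j; induction j with
    | zero => rfl
    | succ j ih =>
      rw [show N + (j+1) = (N+j)+1 from rfl, (hstep (N+j)).1 (hN _ (Nat.le_add_right N j)), ih]
  set lm := lam N with hlm_def
  have hlm : 0 < lm := lampos N
  -- monotone decrease of the values
  set a : ℕ → ℝ := fun n => f (x (N + n)) with ha_def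
  have fdec : ∀ k, N ≤ k → f (x (k+1)) ≤ f (x k) := by
    intro k hk
    have h := hN k hk
    nlinarith [mul_nonneg hσ0.le (gd0 k)]
  have hAa : Antitone a := by
    apply antitone_nat_of_succ_le
    intro n
    exact fdec (N + n) (Nat.le_add_right N n)
  have fbdd : ∀ k, f xs ≤ f (x k) := fun k => hxsmin _ (inC k)
  have hbdd : BddBelow (Set.range a) := ⟨f xs, by rintro r ⟨n, rfl⟩; exact fbdd _⟩
  have haconv : Filter.Tendsto a Filter.atTop (nhds (⨅ n, a n)) :=
    tendsto_atTop_ciInf hAa hbdd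
  -- the quasiconvexity variational inequality
  have quasiVI : ∀ k, ∀ z ∈ C, f z ≤ f (x k) → ⟪f' (x k), z - x k⟫ ≤ 0 :=
    fun k z hz hfz => gda_quasi hquasi (inC k) hz (hf _ (inU k)) hfz
  -- Fejér-type inequality
  have fejer : ∀ k, N ≤ k → ∀ z ∈ C, f z ≤ f (x k) →
      σ * ‖x (k+1) - z‖^2 + 2*lm*(f (x (k+1))) ≤ σ * ‖x k - z‖^2 + 2*lm*(f (x k)) := by
    intro k hk z hz hfz
    have hlamk : lam k = lm := by
      have := lamconst (k - N)
      rwa [Nat.add_sub_cancel' hk] at this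
    have hvi := vi k z hz
    rw [hlamk] at hvi
    rw [show (x k - lm • f' (x k)) - x (k+1) = (x k - x (k+1)) - lm • f' (x k) by abel,
      inner_sub_left, real_inner_smul_left] at hvi
    have F1 : ⟪x k - x (k+1), z - x (k+1)⟫ ≤ lm * ⟪f' (x k), z - x (k+1)⟫ := by linarith
    have F2 : ⟪f' (x k), z - x (k+1)⟫
        = ⟪f' (x k), z - x k⟫ + ⟪f' (x k), x k - x (k+1)⟫ := by
      rw [show z - x (k+1) = (z - x k) + (x k - x (k+1)) by abel, inner_add_right]
    have F3 : ⟪f' (x k), z - x k⟫ ≤ 0 := quasiVI k z hz hfz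
    have F4 : σ * ⟪f' (x k), x k - x (k+1)⟫ ≤ f (x k) - f (x (k+1)) := by
      have := hN k hk
      linarith
    have F5 : ‖x (k+1) - z‖^2
        = ‖x k - z‖^2 + 2*⟪x k - x (k+1), z - x k⟫ + ‖x k - x (k+1)‖^2 := by
      have h := norm_sub_sq_real (x k - z) (x k - x (k+1))
      rw [show (x k - z) - (x k - x (k+1)) = x (k+1) - z by abel] at h
      rw [h]
      have h2 : ⟪x k - z, x k - x (k+1)⟫ = -⟪x k - x (k+1), z - x k⟫ := by
        rw [real_inner_comm, ← inner_neg_right]; congr 1; abel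
      rw [h2]; ring
    have F6 : ⟪x k - x (k+1), z - x (k+1)⟫
        = ⟪x k - x (k+1), z - x k⟫ + ‖x k - x (k+1)‖^2 := by
      rw [show z - x (k+1) = (z - x k) + (x k - x (k+1)) by abel, inner_add_right,
        real_inner_self_eq_norm_sq]
    have G1 := mul_le_mul_of_nonneg_left F1 hσ0.le
    have G2 : σ * (lm * ⟪f' (x k), z - x k⟫) ≤ 0 := by
      have := mul_nonpos_of_nonneg_of_nonpos (mul_nonneg hσ0.le hlm.le) F3
      nlinarith
    have G3 := mul_le_mul_of_nonneg_left F4 (by positivity : (0:ℝ) ≤ 2*lm)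
    have G4 : 0 ≤ σ * ‖x k - x (k+1)‖^2 := by positivity
    have H2 : σ * (lm * ⟪f' (x k), z - x (k+1)⟫)
        = σ * (lm * ⟪f' (x k), z - x k⟫) + σ * (lm * ⟪f' (x k), x k - x (k+1)⟫) := by
      rw [F2]; ring
    have H5 : σ * ‖x (k+1) - z‖^2
        = σ * ‖x k - z‖^2 + 2*(σ*⟪x k - x (k+1), z - x k⟫) + σ*‖x k - x (k+1)‖^2 := by
      rw [F5]; ring
    have H6 : σ * ⟪x k - x (k+1), z - x (k+1)⟫
        = σ*⟪x k - x (k+1), z - x k⟫ + σ*‖x k - x (k+1)‖^2 := by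
      rw [F6]; ring
    linarith [G1, G2, G3, G4, H2, H5, H6]
  -- d_k tends to zero along the tail
  have hdiff0 : Filter.Tendsto (fun n => a n - a (n+1)) Filter.atTop (nhds 0) := by
    have h1 : Filter.Tendsto (fun n => a (n+1)) Filter.atTop (nhds (⨅ n, a n)) :=
      haconv.comp (Filter.tendsto_add_atTop_nat 1)
    simpa using haconv.sub h1
  have hdsq : ∀ n, ‖x (N+n) - x (N+n+1)‖^2 ≤ (lm * (a n - a (n+1)))/σ := by
    intro n
    rw [le_div_iff₀ hσ0]
    have h1 := key (N+n)
    rw [lamconst n] at h1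
    have h2 : σ * ⟪f' (x (N+n)), x (N+n) - x (N+n+1)⟫ ≤ a n - a (n+1) := by
      have hq := hN (N+n) (Nat.le_add_right N n)
      simp only [hQdef] at hq
      show σ * ⟪f' (x (N+n)), x (N+n) - x (N+n+1)⟫ ≤ f (x (N+n)) - f (x (N+n+1))
      linarith
    nlinarith [mul_le_mul_of_nonneg_left h1 hσ0.le,
      mul_le_mul_of_nonneg_left h2 hlm.le]
  have hbnd0 : Filter.Tendsto (fun n => (lm * (a n - a (n+1)))/σ) Filter.atTop (nhds 0) := by
    have := (hdiff0.const_mul lm).div_const σ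
    simpa using this
  have hd0sq : Filter.Tendsto (fun n => ‖x (N+n) - x (N+n+1)‖^2) Filter.atTop (nhds 0) :=
    squeeze_zero (fun n => sq_nonneg _) hdsq hbnd0
  -- boundedness of the tail
  set B : ℝ := (σ * ‖x N - xs‖^2 + 2*lm*(f (x N)) - 2*lm*(f xs))/σ with hB_def
  have hVxs : ∀ n, σ*‖x (N+n) - xs‖^2 + 2*lm*(f (x (N+n)))
      ≤ σ*‖x N - xs‖^2 + 2*lm*(f (x N)) := by
    intro n; induction n with
    | zero => simp
    | succ n ih =>
      have := fejer (N+n) (Nat.le_add_right N n) xs hxs (fbdd (N+n))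
      calc σ*‖x (N+(n+1)) - xs‖^2 + 2*lm*(f (x (N+(n+1))))
          ≤ σ*‖x (N+n) - xs‖^2 + 2*lm*(f (x (N+n))) := this
        _ ≤ _ := ih
  have hball : ∀ n, x (N+n) ∈ Metric.closedBall xs (Real.sqrt B) := by
    intro n
    rw [Metric.mem_closedBall, dist_eq_norm]
    have h1 : ‖x (N+n) - xs‖^2 ≤ B := by
      rw [hB_def, le_div_iff₀ hσ0]
      have := hVxs n
      nlinarith [mul_le_mul_of_nonneg_left (fbdd (N+n)) (by positivity : (0:ℝ) ≤ 2*lm)]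
    calc ‖x (N+n) - xs‖ = Real.sqrt (‖x (N+n) - xs‖^2) :=
          (Real.sqrt_sq (norm_nonneg _)).symm
      _ ≤ Real.sqrt B := Real.sqrt_le_sqrt h1
  -- Bolzano–Weierstrass
  obtain ⟨xb, -, φ, hφ, hφtend⟩ :=
    tendsto_subseq_of_bounded Metric.isBounded_closedBall hball
  have hxbC : xb ∈ C := hCcl.mem_of_tendsto hφtend
    (Filter.Eventually.of_forall (fun n => inC _))
  have hxbU : xb ∈ U := hCU hxbC
  have hfcont : ContinuousAt f xb := (hf xb hxbU).differentiableAt.continuousAt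
  have hfsub : Filter.Tendsto (fun n => f (x (N + φ n))) Filter.atTop (nhds (f xb)) :=
    hfcont.tendsto.comp hφtend
  have hasub : Filter.Tendsto (a ∘ φ) Filter.atTop (nhds (⨅ n, a n)) :=
    haconv.comp hφ.tendsto_atTop
  have hFlim : (⨅ n, a n) = f xb := tendsto_nhds_unique hasub hfsub
  have hflb : ∀ n, f xb ≤ a n := fun n => hFlim ▸ ciInf_le hbdd n
  -- full convergence to xb
  set W : ℕ → ℝ := fun n => σ*‖x (N+n) - xb‖^2 + 2*lm*(a n) with hW_def
  have hWanti : Antitone W := by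
    apply antitone_nat_of_succ_le
    intro n
    exact fejer (N+n) (Nat.le_add_right N n) xb hxbC (hflb n)
  have hWbdd : BddBelow (Set.range W) := by
    refine ⟨2*lm*(f xs), ?_⟩
    rintro r ⟨n, rfl⟩
    have h1 : f xs ≤ a n := fbdd (N+n)
    show 2*lm*(f xs) ≤ σ*‖x (N+n) - xb‖^2 + 2*lm*(a n)
    nlinarith [sq_nonneg ‖x (N+n) - xb‖,
      mul_le_mul_of_nonneg_left h1 (by positivity : (0:ℝ) ≤ 2*lm)]
  have hWconv : Filter.Tendsto W Filter.atTop (nhds (⨅ n, W n)) :=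
    tendsto_atTop_ciInf hWanti hWbdd
  have hsubnorm : Filter.Tendsto (fun n => ‖x (N + φ n) - xb‖) Filter.atTop (nhds 0) := by
    have h1 : Filter.Tendsto (fun n => x (N + φ n) - xb) Filter.atTop (nhds (xb - xb)) :=
      hφtend.sub tendsto_const_nhds
    rw [sub_self] at h1
    simpa using h1.norm
  have hWsub : Filter.Tendsto (W ∘ φ) Filter.atTop (nhds (2*lm*(f xb))) := by
    have h2 : Filter.Tendsto (fun n => σ*‖x (N + φ n) - xb‖^2) Filter.atTop (nhds 0) := by
      have := ((hsubnorm.mul hsubnorm).const_mul σ)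
      simpa [pow_two] using this
    have h3 : Filter.Tendsto (fun n => 2*lm*(a (φ n))) Filter.atTop (nhds (2*lm*(f xb))) := by
      have : Filter.Tendsto (fun n => a (φ n)) Filter.atTop (nhds (f xb)) := hFlim ▸ hasub
      exact this.const_mul _
    have := h2.add h3
    rw [zero_add] at this
    exact this
  have hWinf : (⨅ n, W n) = 2*lm*(f xb) :=
    tendsto_nhds_unique (hWconv.comp hφ.tendsto_atTop) hWsub
  have hsq0 : Filter.Tendsto (fun n => σ*‖x (N+n) - xb‖^2) Filter.atTop (nhds 0) := by
    have h1 := hWconv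
    rw [hWinf] at h1
    have h2 : Filter.Tendsto (fun n => 2*lm*(a n)) Filter.atTop (nhds (2*lm*(f xb))) := by
      have : Filter.Tendsto a Filter.atTop (nhds (f xb)) := hFlim ▸ haconv
      exact this.const_mul _
    have h3 := h1.sub h2
    rw [sub_self] at h3
    refine h3.congr (fun n => ?_)
    show W n - 2*lm*(a n) = σ*‖x (N+n) - xb‖^2
    simp only [hW_def]
    ring
  have hnorm0 : Filter.Tendsto (fun n => ‖x (N+n) - xb‖) Filter.atTop (nhds 0) := by
    have h1 : Filter.Tendsto (fun n => ‖x (N+n) - xb‖^2) Filter.atTop (nhds 0) := by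
      have h2 := hsq0.const_mul σ⁻¹
      rw [mul_zero] at h2
      refine h2.congr (fun n => ?_)
      rw [← mul_assoc, inv_mul_cancel₀ (ne_of_gt hσ0), one_mul]
    have h3 := (Real.continuous_sqrt.tendsto 0).comp h1
    rw [Real.sqrt_zero] at h3
    refine h3.congr (fun n => ?_)
    simp [Real.sqrt_sq (norm_nonneg _)]
  have hytend : Filter.Tendsto (fun n => x (N+n)) Filter.atTop (nhds xb) := by
    have hsub : Filter.Tendsto (fun n => x (N+n) - xb) Filter.atTop (nhds 0) :=
      tendsto_zero_iff_norm_tendsto_zero.mpr hnorm0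
    exact tendsto_sub_nhds_zero_iff.mp hsub
  have hxtend : Filter.Tendsto x Filter.atTop (nhds xb) := by
    rw [← Filter.tendsto_add_atTop_iff_nat N]
    refine hytend.congr (fun n => ?_)
    rw [Nat.add_comm]
  -- gradient continuity along the sequence
  have hgtend : Filter.Tendsto (fun n => f' (x (N+n))) Filter.atTop (nhds (f' xb)) := by
    have hn1 : Filter.Tendsto (fun n => ‖f' (x (N+n)) - f' xb‖) Filter.atTop (nhds 0) := by
      refine squeeze_zero (fun n => norm_nonneg _)
        (fun n => hLip _ (inU _) xb hxbU) ?_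
      have := hnorm0.const_mul L
      simpa using this
    exact tendsto_sub_nhds_zero_iff.mp (tendsto_zero_iff_norm_tendsto_zero.mpr hn1)
  have hx1tend : Filter.Tendsto (fun n => x (N+n+1)) Filter.atTop (nhds xb) :=
    hytend.comp (Filter.tendsto_add_atTop_nat 1)
  -- the variational inequality at the limit
  refine ⟨xb, hxbC, hxtend, ?_⟩
  intro z hz
  have hAk : ∀ n, ⟪(x (N+n) - lm • f' (x (N+n))) - x (N+n+1), z - x (N+n+1)⟫ ≤ 0 := by
    intro n
    have := vi (N+n) z hz
    rwa [lamconst n] at this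
  have hlim : Filter.Tendsto
      (fun n => ⟪(x (N+n) - lm • f' (x (N+n))) - x (N+n+1), z - x (N+n+1)⟫)
      Filter.atTop (nhds ⟪(xb - lm • f' xb) - xb, z - xb⟫) :=
    Filter.Tendsto.inner ((hytend.sub (hgtend.const_smul lm)).sub hx1tend)
      (tendsto_const_nhds.sub hx1tend)
  have hfin : ⟪(xb - lm • f' xb) - xb, z - xb⟫ ≤ 0 :=
    le_of_tendsto hlim (Filter.Eventually.of_forall hAk)
  have h2 : ⟪(xb - lm • f' xb) - xb, z - xb⟫ = -(lm * ⟪f' xb, z - xb⟫) := by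
    rw [show (xb - lm • f' xb) - xb = -(lm • f' xb) by abel, inner_neg_left,
      real_inner_smul_left]
  rw [h2] at hfin
  have h3 : 0 ≤ lm * ⟪f' xb, z - xb⟫ := by linarith
  by_contra h4
  push_neg at h4
  nlinarith [hlm]
end

section
/- If f is pseudoconvex on C, then the sequence {x^k} generated by Algorithm GDA converges to a solution of min_{x∈C} f(x). -/
open Filter Topology

set_option maxHeartbeats 1000000 in
theorem stmt_16 {m : ℕ} (C : Set (EuclideanSpace ℝ (Fin m))) (hC : C.Nonempty)
    (hCcl : IsClosed C) (hCconv : Convex ℝ C)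
    (f : EuclideanSpace ℝ (Fin m) → ℝ)
    (f' : EuclideanSpace ℝ (Fin m) → EuclideanSpace ℝ (Fin m))
    (U : Set (EuclideanSpace ℝ (Fin m))) (hU : IsOpen U) (hCU : C ⊆ U)
    (hf : ∀ x ∈ U, HasGradientAt f (f' x) x)
    (L : ℝ) (hL : 0 ≤ L)
    (hLip : ∀ x ∈ U, ∀ y ∈ U, ‖f' x - f' y‖ ≤ L * ‖x - y‖)
    (σ κ : ℝ) (hσ : σ ∈ Set.Ioo (0:ℝ) 1) (hκ : κ ∈ Set.Ioo (0:ℝ) 1)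
    (x : ℕ → EuclideanSpace ℝ (Fin m)) (lam : ℕ → ℝ)
    (hx0 : x 0 ∈ C) (hlam0 : 0 < lam 0)
    (hproj : ∀ k, x (k + 1) ∈ C ∧ ∀ z ∈ C,
      ‖x (k + 1) - (x k - lam k • f' (x k))‖ ≤ ‖z - (x k - lam k • f' (x k))‖)
    (hstep : ∀ k,
      (f (x (k + 1)) ≤ f (x k) - σ * (inner ℝ (f' (x k)) (x k - x (k + 1)) : ℝ) →
        lam (k + 1) = lam k) ∧
      (¬ f (x (k + 1)) ≤ f (x k) - σ * (inner ℝ (f' (x k)) (x k - x (k + 1)) : ℝ) →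
        lam (k + 1) = κ * lam k))
    (hsol : ∃ xs ∈ C, ∀ z ∈ C, f xs ≤ f z)
    (hpseudo : ∀ u ∈ C, ∀ v ∈ C, 0 ≤ (inner ℝ (f' u) (v - u) : ℝ) → f u ≤ f v) :
    ∃ xb ∈ C, Filter.Tendsto x Filter.atTop (nhds xb) ∧ ∀ z ∈ C, f xb ≤ f z := by
  obtain ⟨hσ0, hσ1⟩ := hσ
  obtain ⟨hκ0, hκ1⟩ := hκ
  obtain ⟨xs, hxsC, hxsmin⟩ := hsol
  set L1 : ℝ := L + 1 with hL1def
  have hL1 : 0 < L1 := by positivity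
  have hLip1 : ∀ a ∈ U, ∀ b ∈ U, ‖f' a - f' b‖ ≤ L1 * ‖a - b‖ := fun a ha b hb =>
    (hLip a ha b hb).trans (by nlinarith [norm_nonneg (a - b)])
  have hxC : ∀ k, x k ∈ C := by
    intro k; cases k with
    | zero => exact hx0
    | succ n => exact (hproj n).1
  -- chain rule helper
  have hchain : ∀ c d : EuclideanSpace ℝ (Fin m), ∀ t : ℝ, c + t • d ∈ U →
      HasDerivAt (fun s : ℝ => f (c + s • d)) ((inner ℝ (f' (c + t • d)) d : ℝ)) t := by
    intro c d t h
    have hγ : HasDerivAt (fun s : ℝ => c + s • d) d t := by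
      simpa using ((hasDerivAt_id t).smul_const d).const_add c
    have := ((hf _ h).hasFDerivAt).comp_hasDerivAt t hγ
    simp only [InnerProductSpace.toDual_apply_apply] at this
    exact this
  -- segment in C
  have hseg : ∀ a ∈ C, ∀ b ∈ C, ∀ t ∈ Set.Icc (0:ℝ) 1, a + t • (b - a) ∈ C := by
    intro a ha b hb t ht
    have := hCconv ha hb (by linarith [ht.2] : (0:ℝ) ≤ 1 - t) ht.1 (by ring)
    convert this using 1
    module
  -- descent lemma
  have descent : ∀ a ∈ C, ∀ b ∈ C,
      f b ≤ f a + (inner ℝ (f' a) (b - a) : ℝ) + L1 / 2 * ‖b - a‖ ^ 2 := by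
    intro a ha b hb
    set d : EuclideanSpace ℝ (Fin m) := b - a with hd
    set c1 : ℝ := (inner ℝ (f' a) d : ℝ) with hc1
    set c2 : ℝ := L1 / 2 * ‖d‖ ^ 2 with hc2
    set ψ : ℝ → ℝ := fun t => f (a + t • d) - c1 * t - c2 * t ^ 2 with hψ
    have hmem : ∀ t ∈ Set.Icc (0:ℝ) 1, a + t • d ∈ U := fun t ht => hCU (hseg a ha b hb t ht)
    have hder : ∀ t ∈ Set.Icc (0:ℝ) 1, HasDerivAt ψ
        ((inner ℝ (f' (a + t • d)) d : ℝ) - c1 - c2 * (2 * t)) t := by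
      intro t ht
      have h1 := hchain a d t (hmem t ht)
      have h2 : HasDerivAt (fun s : ℝ => c1 * s) c1 t := by
        simpa using (hasDerivAt_id t).const_mul c1
      have h3 : HasDerivAt (fun s : ℝ => c2 * s ^ 2) (c2 * (2 * t)) t := by
        simpa using (hasDerivAt_pow 2 t).const_mul c2
      exact (h1.sub h2).sub h3
    have hψanti : AntitoneOn ψ (Set.Icc 0 1) := by
      apply antitoneOn_of_deriv_nonpos (convex_Icc 0 1)
      · intro t ht
        exact (hder t ht).continuousAt.continuousWithinAt
      · intro t ht
        rw [interior_Icc] at ht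
        exact ((hder t (Set.mem_Icc_of_Ioo ht)).differentiableAt).differentiableWithinAt
      · intro t ht
        rw [interior_Icc] at ht
        rw [(hder t (Set.mem_Icc_of_Ioo ht)).deriv]
        have hlip := hLip1 _ (hmem t (Set.mem_Icc_of_Ioo ht)) _ (hCU ha)
        have hin : (inner ℝ (f' (a + t • d)) d : ℝ) - c1
            = (inner ℝ (f' (a + t • d) - f' a) d : ℝ) := by
          rw [inner_sub_left]
        have hb1 : (inner ℝ (f' (a + t • d) - f' a) d : ℝ) ≤ ‖f' (a + t • d) - f' a‖ * ‖d‖ :=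
          real_inner_le_norm _ _
        have heqn : a + t • d - a = t • d := by abel
        rw [heqn] at hlip
        have hnn : ‖t • d‖ = t * ‖d‖ := by
          rw [norm_smul, Real.norm_eq_abs, abs_of_pos ht.1]
        rw [hnn] at hlip
        have hfin : (inner ℝ (f' (a + t • d)) d : ℝ) - c1 ≤ L1 * t * (‖d‖ * ‖d‖) := by
          calc (inner ℝ (f' (a + t • d)) d : ℝ) - c1
              = (inner ℝ (f' (a + t • d) - f' a) d : ℝ) := hin
            _ ≤ ‖f' (a + t • d) - f' a‖ * ‖d‖ := hb1
            _ ≤ L1 * (t * ‖d‖) * ‖d‖ := mul_le_mul_of_nonneg_right hlip (norm_nonneg d)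
            _ = L1 * t * (‖d‖ * ‖d‖) := by ring
        have hc2' : c2 * (2 * t) = L1 * t * (‖d‖ * ‖d‖) := by rw [hc2]; ring
        linarith [hfin]
    have h01 := hψanti (Set.left_mem_Icc.2 zero_le_one) (Set.right_mem_Icc.2 zero_le_one)
      zero_le_one
    have he0 : a + (0:ℝ) • d = a := by simp
    have he1 : a + (1:ℝ) • d = b := by simp [hd]
    simp only [hψ, he0, he1] at h01
    nlinarith [h01]
  -- variational inequality of the projection (abstract form)
  have hVIgen : ∀ u v : EuclideanSpace ℝ (Fin m), v ∈ C → (∀ z ∈ C, ‖v - u‖ ≤ ‖z - u‖) →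
      ∀ z ∈ C, 0 ≤ (inner ℝ (v - u) (z - v) : ℝ) := by
    intro u v hv hmin z hz
    haveI : Nonempty ↑C := ⟨⟨v, hv⟩⟩
    have hbdd : BddBelow (Set.range fun w : C => ‖u - (w : EuclideanSpace ℝ (Fin m))‖) :=
      ⟨0, by rintro r ⟨w, rfl⟩; exact norm_nonneg _⟩
    have hle1 : ∀ w : C, ‖u - v‖ ≤ ‖u - (w : EuclideanSpace ℝ (Fin m))‖ := fun w =>
      (norm_sub_rev _ _).le.trans ((hmin w w.2).trans (norm_sub_rev _ _).le)
    have heq : ‖u - v‖ = ⨅ w : C, ‖u - (w : EuclideanSpace ℝ (Fin m))‖ :=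
      le_antisymm (le_ciInf hle1) (ciInf_le hbdd ⟨v, hv⟩)
    have h := (norm_eq_iInf_iff_real_inner_le_zero hCconv hv).1 heq z hz
    have h2 : (inner ℝ (u - v) (z - v) : ℝ) = -(inner ℝ (v - u) (z - v) : ℝ) := by
      rw [← inner_neg_left]; congr 1; abel
    rw [h2] at h
    linarith
  have hVI : ∀ k, ∀ z ∈ C,
      0 ≤ (inner ℝ (x (k+1) - x k + lam k • f' (x k)) (z - x (k+1)) : ℝ) := by
    intro k z hz
    have h := hVIgen (x k - lam k • f' (x k)) (x (k+1)) (hproj k).1 (hproj k).2 z hz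
    have h2 : x (k+1) - (x k - lam k • f' (x k)) = x (k+1) - x k + lam k • f' (x k) := by
      abel
    rwa [h2] at h
  -- Fejér-type core inequality
  have key2 : ∀ k, ∀ w ∈ C, ‖x (k+1) - w‖ ^ 2 + ‖x (k+1) - x k‖ ^ 2 ≤
      ‖x k - w‖ ^ 2 + 2 * lam k * (inner ℝ (f' (x k)) (w - x (k+1)) : ℝ) := by
    intro k w hw
    have hvi := hVI k w hw
    have hnorm : ‖x k - w‖ ^ 2 = ‖x (k+1) - w‖ ^ 2
        + 2 * (inner ℝ (x (k+1) - w) (x k - x (k+1)) : ℝ) + ‖x k - x (k+1)‖ ^ 2 := by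
      have h : x k - w = (x (k+1) - w) + (x k - x (k+1)) := by abel
      rw [h, norm_add_sq_real]
    have hswap : (inner ℝ (x (k+1) - w) (x k - x (k+1)) : ℝ)
        = (inner ℝ (x (k+1) - x k + lam k • f' (x k)) (w - x (k+1)) : ℝ)
          - lam k * (inner ℝ (f' (x k)) (w - x (k+1)) : ℝ) := by
      rw [inner_add_left, real_inner_smul_left]
      have h : (inner ℝ (x (k+1) - w) (x k - x (k+1)) : ℝ)
          = (inner ℝ (x (k+1) - x k) (w - x (k+1)) : ℝ) := by
        rw [← neg_sub w (x (k+1)), ← neg_sub (x (k+1)) (x k), inner_neg_neg, real_inner_comm]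
      rw [h]; ring
    have hrev : ‖x (k+1) - x k‖ = ‖x k - x (k+1)‖ := norm_sub_rev _ _
    rw [hrev]
    linarith [hnorm, hswap, hvi]
  have hlampos : ∀ k, 0 < lam k := by
    intro k; induction k with
    | zero => exact hlam0
    | succ n ih =>
      by_cases h : f (x (n + 1)) ≤ f (x n) - σ * (inner ℝ (f' (x n)) (x n - x (n + 1)) : ℝ)
      · rw [(hstep n).1 h]; exact ih
      · rw [(hstep n).2 h]; positivity
  have key1 : ∀ k, ‖x (k+1) - x k‖ ^ 2 ≤ lam k * (inner ℝ (f' (x k)) (x k - x (k+1)) : ℝ) := by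
    intro k
    have h := key2 k (x k) (hxC k)
    rw [sub_self, norm_zero] at h
    nlinarith [h]
  have hanonneg : ∀ k, 0 ≤ (inner ℝ (f' (x k)) (x k - x (k+1)) : ℝ) := by
    intro k
    nlinarith [key1 k, hlampos k, sq_nonneg (‖x (k+1) - x k‖), norm_nonneg (x (k+1) - x k)]
  -- if the Armijo test fails then lam k is large
  have hfail : ∀ k, ¬ f (x (k + 1)) ≤ f (x k) - σ * (inner ℝ (f' (x k)) (x k - x (k + 1)) : ℝ) →
      2 * (1 - σ) < L1 * lam k := by
    intro k hnot
    have hdes := descent (x k) (hxC k) (x (k+1)) (hxC (k+1))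
    have hinn : (inner ℝ (f' (x k)) (x (k+1) - x k) : ℝ)
        = -(inner ℝ (f' (x k)) (x k - x (k+1)) : ℝ) := by
      rw [← inner_neg_right]; congr 1; abel
    rw [hinn] at hdes
    have hk1 := key1 k
    have hddne : x (k+1) - x k ≠ 0 := by
      intro h0
      have h1 : x (k+1) = x k := by rwa [sub_eq_zero] at h0
      apply hnot
      rw [h1]
      simp
    have hpos : 0 < ‖x (k+1) - x k‖ ^ 2 := pow_pos (norm_pos_iff.2 hddne) 2
    push_neg at hnot
    nlinarith [hk1, hpos, hlampos k, hanonneg k, hdes, hnot,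
      mul_le_mul_of_nonneg_left hk1 (by linarith : (0:ℝ) ≤ 1 - σ)]
  have hlamanti : Antitone lam := by
    apply antitone_nat_of_succ_le
    intro n
    by_cases h : f (x (n + 1)) ≤ f (x n) - σ * (inner ℝ (f' (x n)) (x n - x (n + 1)) : ℝ)
    · rw [(hstep n).1 h]
    · rw [(hstep n).2 h]; nlinarith [hlampos n]
  set μ : ℝ := min (lam 0) (2 * κ * (1 - σ) / L1) with hμdef
  have hμpos : 0 < μ := by
    refine lt_min hlam0 (div_pos (by nlinarith) hL1)
  have hlamlb : ∀ k, μ ≤ lam k := by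
    intro k; induction k with
    | zero => exact min_le_left _ _
    | succ n ih =>
      by_cases h : f (x (n + 1)) ≤ f (x n) - σ * (inner ℝ (f' (x n)) (x n - x (n + 1)) : ℝ)
      · rw [(hstep n).1 h]; exact ih
      · rw [(hstep n).2 h]
        have h2 := hfail n h
        have : 2 * κ * (1 - σ) / L1 ≤ κ * lam n := by
          rw [div_le_iff₀ hL1]; nlinarith
        exact le_trans (min_le_right _ _) this
  -- lam is eventually constant
  obtain ⟨K, hK⟩ : ∃ K, ∀ k, K ≤ k → lam (k + 1) = lam k := by
    by_contra hcon
    push_neg at hcon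
    obtain ⟨l, hl⟩ : ∃ l, Tendsto lam atTop (𝓝 l) :=
      ⟨_, tendsto_atTop_ciInf hlamanti ⟨μ, by rintro r ⟨k, rfl⟩; exact hlamlb k⟩⟩
    have hlμ : μ ≤ l := ge_of_tendsto hl (Eventually.of_forall hlamlb)
    have hfreq : ∃ᶠ k in atTop, lam (k + 1) = κ * lam k := by
      rw [frequently_atTop]
      intro K0
      obtain ⟨k, hk1, hk2⟩ := hcon K0
      refine ⟨k, hk1, ?_⟩
      by_cases h : f (x (k + 1)) ≤ f (x k) - σ * (inner ℝ (f' (x k)) (x k - x (k + 1)) : ℝ)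
      · exact absurd ((hstep k).1 h) hk2
      · exact (hstep k).2 h
    have h1 : Tendsto (fun k => lam (k + 1)) atTop (𝓝 l) := (tendsto_add_atTop_iff_nat 1).2 hl
    have h2 : Tendsto (fun k => κ * lam k) atTop (𝓝 (κ * l)) := hl.const_mul κ
    have heq : l = κ * l := tendsto_nhds_unique_of_frequently_eq h1 h2 hfreq
    nlinarith [hμpos, hlμ, heq]
  have hlamK : ∀ k, K ≤ k → lam k = lam K := by
    intro k hk
    induction k, hk using Nat.le_induction with
    | base => rfl
    | succ n hn ih => rw [hK n hn, ih]
  -- Armijo holds for k ≥ K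
  have hArm : ∀ k, K ≤ k →
      f (x (k + 1)) ≤ f (x k) - σ * (inner ℝ (f' (x k)) (x k - x (k + 1)) : ℝ) := by
    intro k hk
    by_contra h
    have h1 := (hstep k).2 h
    have h2 := hK k hk
    nlinarith [hlampos k]
  by_cases hSol : ∃ N, ∀ z ∈ C, f (x N) ≤ f z
  · -- case 1 : some iterate is a solution; the sequence is eventually constant
    obtain ⟨N, hN⟩ := hSol
    have hxNC := hxC N
    have hstat : ∀ z ∈ C, 0 ≤ (inner ℝ (f' (x N)) (z - x N) : ℝ) := by
      intro z hz
      by_contra hneg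
      push_neg at hneg
      set d : EuclideanSpace ℝ (Fin m) := z - x N with hd
      have hder : HasDerivAt (fun t : ℝ => f (x N + t • d)) ((inner ℝ (f' (x N)) d : ℝ)) 0 := by
        have h0 : x N + (0:ℝ) • d ∈ U := by simpa using hCU hxNC
        simpa using hchain (x N) d 0 h0
      have hslope := hasDerivAt_iff_tendsto_slope.1 hder
      have hmono : 𝓝[>] (0:ℝ) ≤ 𝓝[≠] (0:ℝ) :=
        nhdsWithin_mono 0 fun t ht => ne_of_gt ht
      have hslope' := hslope.mono_left hmono
      have hev : ∀ᶠ t in 𝓝[>] (0:ℝ), 0 ≤ slope (fun t : ℝ => f (x N + t • d)) 0 t := by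
        filter_upwards [self_mem_nhdsWithin,
          eventually_nhdsWithin_of_eventually_nhds (eventually_lt_nhds zero_lt_one)]
          with t ht1 ht2
        have ht1' : (0:ℝ) < t := ht1
        have hmem : x N + t • d ∈ C := hseg (x N) hxNC z hz t ⟨ht1'.le, ht2.le⟩
        have hge : f (x N) ≤ f (x N + t • d) := hN _ hmem
        have h00 : f (x N + (0:ℝ) • d) = f (x N) := by simp
        rw [slope_def_field, h00]
        apply div_nonneg (by linarith) (by linarith)
      have hcontra := ge_of_tendsto hslope' hev
      exact absurd hcontra (not_le.2 hneg)
    have hconst : ∀ k, N ≤ k → x k = x N := by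
      intro k hk
      induction k, hk using Nat.le_induction with
      | base => rfl
      | succ n hn ih =>
        have h := key2 n (x N) hxNC
        rw [ih, sub_self, norm_zero] at h
        have hst := hstat (x (n+1)) (hxC (n+1))
        have heq : (inner ℝ (f' (x N)) (x N - x (n+1)) : ℝ)
            = -(inner ℝ (f' (x N)) (x (n+1) - x N) : ℝ) := by
          rw [← inner_neg_right]; congr 1; abel
        have h5 : (inner ℝ (f' (x N)) (x N - x (n+1)) : ℝ) ≤ 0 := by rw [heq]; linarith
        have h3 : ‖x (n+1) - x N‖ ^ 2 ≤ 0 := by nlinarith [h, h5, hlampos n]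
        have h4 : ‖x (n+1) - x N‖ = 0 := by nlinarith [norm_nonneg (x (n+1) - x N)]
        rw [← sub_eq_zero]; exact norm_eq_zero.1 h4
    refine ⟨x N, hxC N, ?_, hN⟩
    have : ∀ᶠ k in atTop, x k = x N := eventually_atTop.2 ⟨N, hconst⟩
    exact Tendsto.congr' (this.mono fun k hk => hk.symm) tendsto_const_nhds
  · -- case 2 : no iterate is a solution
    push_neg at hSol
    have hsign : ∀ k, ∀ w ∈ C, (∀ z ∈ C, f w ≤ f z) →
        (inner ℝ (f' (x k)) (w - x k) : ℝ) ≤ 0 := by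
      intro k w hw hwmin
      by_contra h
      push_neg at h
      have := hpseudo (x k) (hxC k) w hw h.le
      obtain ⟨z, hz, hzlt⟩ := hSol k
      exact absurd (this.trans (hwmin z hz)) (not_le.2 hzlt)
    -- the values f (x (K+j)) are antitone and bounded below
    set y : ℕ → ℝ := fun j => f (x (K + j)) with hydef
    have hymono : Antitone y := by
      apply antitone_nat_of_succ_le
      intro j
      have h := hArm (K + j) (Nat.le_add_right _ _)
      have := hanonneg (K + j)
      simp only [hydef]
      calc f (x (K + (j+1))) = f (x ((K + j) + 1)) := by ring_nf
        _ ≤ f (x (K + j)) := by nlinarith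
    have hybdd : BddBelow (Set.range y) := by
      refine ⟨f xs, ?_⟩
      rintro r ⟨j, rfl⟩
      exact hxsmin _ (hxC _)
    obtain ⟨Fl, hFl⟩ : ∃ Fl, Tendsto y atTop (𝓝 Fl) :=
      ⟨_, tendsto_atTop_ciInf hymono hybdd⟩
    -- a (K+j) → 0 and steps → 0
    have ha0 : Tendsto (fun j => (inner ℝ (f' (x (K + j))) (x (K + j) - x (K + j + 1)) : ℝ))
        atTop (𝓝 0) := by
      have hydiff : Tendsto (fun j => (y j - y (j+1)) / σ) atTop (𝓝 0) := by
        have h1 : Tendsto (fun j => y (j+1)) atTop (𝓝 Fl) := (tendsto_add_atTop_iff_nat 1).2 hFl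
        have h2 := (hFl.sub h1).div_const σ
        simpa using h2
      apply squeeze_zero (fun j => hanonneg (K + j)) (fun j => ?_) hydiff
      rw [le_div_iff₀ hσ0]
      have harm := hArm (K + j) (Nat.le_add_right _ _)
      have hy1 : y j = f (x (K + j)) := rfl
      have hy2 : y (j+1) = f (x (K + j + 1)) := rfl
      rw [hy1, hy2]
      linarith
    have hd2 : Tendsto (fun j => ‖x (K + j + 1) - x (K + j)‖ ^ 2) atTop (𝓝 0) := by
      have hup : Tendsto (fun j => lam 0 *
          (inner ℝ (f' (x (K + j))) (x (K + j) - x (K + j + 1)) : ℝ)) atTop (𝓝 0) := by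
        simpa using ha0.const_mul (lam 0)
      apply squeeze_zero (fun j => sq_nonneg _) (fun j => ?_) hup
      calc ‖x (K + j + 1) - x (K + j)‖ ^ 2
          ≤ lam (K + j) * (inner ℝ (f' (x (K + j))) (x (K + j) - x (K + j + 1)) : ℝ) :=
            key1 (K + j)
        _ ≤ lam 0 * (inner ℝ (f' (x (K + j))) (x (K + j) - x (K + j + 1)) : ℝ) :=
            mul_le_mul_of_nonneg_right (hlamanti (Nat.zero_le _)) (hanonneg (K + j))
    have hdn : Tendsto (fun j => ‖x (K + j + 1) - x (K + j)‖) atTop (𝓝 0) := by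
      have h := (Real.continuous_sqrt.tendsto 0).comp hd2
      rw [Real.sqrt_zero] at h
      exact h.congr fun j => Real.sqrt_sq (norm_nonneg _)
    have hd0 : Tendsto (fun j => x (K + j + 1) - x (K + j)) atTop (𝓝 0) :=
      tendsto_zero_iff_norm_tendsto_zero.2 hdn
    -- Fejér with respect to any solution w
    have hfejer : ∀ w ∈ C, (∀ z ∈ C, f w ≤ f z) → ∀ j,
        ‖x (K + (j+1)) - w‖ ^ 2 + 2 * lam 0 / σ * f (x (K + (j+1))) ≤
        ‖x (K + j) - w‖ ^ 2 + 2 * lam 0 / σ * f (x (K + j)) := by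
      intro w hw hwmin j
      have h := key2 (K + j) w hw
      have harm := hArm (K + j) (Nat.le_add_right _ _)
      have hs := hsign (K + j) w hw hwmin
      have hsplit : (inner ℝ (f' (x (K + j))) (w - x (K + j + 1)) : ℝ)
          = (inner ℝ (f' (x (K + j))) (w - x (K + j)) : ℝ)
            + (inner ℝ (f' (x (K + j))) (x (K + j) - x (K + j + 1)) : ℝ) := by
        rw [← inner_add_right]; congr 1; abel
      have hl0 : lam (K + j) ≤ lam 0 := hlamanti (Nat.zero_le _)
      have ha := hanonneg (K + j)
      have h1 : σ * (inner ℝ (f' (x (K + j))) (x (K + j) - x (K + j + 1)) : ℝ)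
          ≤ f (x (K + j)) - f (x (K + j + 1)) := by linarith
      have h2 : 2 * lam 0 * (inner ℝ (f' (x (K + j))) (x (K + j) - x (K + j + 1)) : ℝ)
          ≤ 2 * lam 0 / σ * f (x (K + j)) - 2 * lam 0 / σ * f (x (K + j + 1)) := by
        rw [← mul_sub, div_mul_eq_mul_div, le_div_iff₀ hσ0]
        nlinarith [mul_le_mul_of_nonneg_left h1 (by positivity : (0:ℝ) ≤ 2 * lam 0)]
      have h3 : ‖x (K + j + 1) - w‖ ^ 2 ≤ ‖x (K + j) - w‖ ^ 2
          + 2 * lam (K + j) * (inner ℝ (f' (x (K + j))) (x (K + j) - x (K + j + 1)) : ℝ) := by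
        nlinarith [h, hsplit, mul_nonpos_of_nonneg_of_nonpos (hlampos (K + j)).le hs,
          sq_nonneg ‖x (K + j + 1) - x (K + j)‖]
      have h4 : 2 * lam (K + j) * (inner ℝ (f' (x (K + j))) (x (K + j) - x (K + j + 1)) : ℝ)
          ≤ 2 * lam 0 * (inner ℝ (f' (x (K + j))) (x (K + j) - x (K + j + 1)) : ℝ) := by
        nlinarith [hl0, ha]
      show ‖x (K + j + 1) - w‖ ^ 2 + 2 * lam 0 / σ * f (x (K + j + 1)) ≤
        ‖x (K + j) - w‖ ^ 2 + 2 * lam 0 / σ * f (x (K + j))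
      linarith
    -- boundedness and subsequence
    have hbdd : ∀ j, x (K + j) ∈ Metric.closedBall xs
        (Real.sqrt (‖x K - xs‖ ^ 2 + 2 * lam 0 / σ * f (x K) - 2 * lam 0 / σ * f xs)) := by
      intro j
      have hmono : ∀ i, ‖x (K + i) - xs‖ ^ 2 + 2 * lam 0 / σ * f (x (K + i)) ≤
          ‖x (K + 0) - xs‖ ^ 2 + 2 * lam 0 / σ * f (x (K + 0)) := by
        intro i; induction i with
        | zero => exact le_refl _
        | succ n ih => exact (hfejer xs hxsC hxsmin n).trans ih
      have h1 := hmono j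
      simp only [Nat.add_zero] at h1
      rw [Metric.mem_closedBall, dist_eq_norm]
      calc ‖x (K + j) - xs‖ = Real.sqrt (‖x (K + j) - xs‖ ^ 2) :=
            (Real.sqrt_sq (norm_nonneg _)).symm
        _ ≤ Real.sqrt (‖x K - xs‖ ^ 2 + 2 * lam 0 / σ * f (x K) - 2 * lam 0 / σ * f xs) := by
            apply Real.sqrt_le_sqrt
            have hfs : f xs ≤ f (x (K + j)) := hxsmin _ (hxC _)
            nlinarith [h1, mul_le_mul_of_nonneg_left hfs
              (by positivity : (0:ℝ) ≤ 2 * lam 0 / σ)]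
    obtain ⟨xb, _, φ, hφ, hφtend⟩ :=
      tendsto_subseq_of_bounded Metric.isBounded_closedBall hbdd
    have hxbC : xb ∈ C :=
      hCcl.mem_of_tendsto hφtend (Eventually.of_forall fun j => hxC _)
    have hddphi : Tendsto (fun j => x (K + φ j + 1) - x (K + φ j)) atTop (𝓝 0) :=
      hd0.comp hφ.tendsto_atTop
    have hsub2 : Tendsto (fun j => x (K + φ j + 1)) atTop (𝓝 xb) := by
      have h := hφtend.add hddphi
      rw [add_zero] at h
      exact h.congr fun j => by
        show x (K + φ j) + (x (K + φ j + 1) - x (K + φ j)) = x (K + φ j + 1)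
        abel
    have hgrad : Tendsto (fun j => f' (x (K + φ j))) atTop (𝓝 (f' xb)) := by
      have hnorm : ∀ j, ‖f' (x (K + φ j)) - f' xb‖ ≤ L1 * ‖x (K + φ j) - xb‖ := fun j =>
        hLip1 _ (hCU (hxC _)) _ (hCU hxbC)
      have h2 : Tendsto (fun j => L1 * ‖x (K + φ j) - xb‖) atTop (𝓝 0) := by
        have h3 : Tendsto (fun j => x (K + φ j) - xb) atTop (𝓝 0) := by
          simpa using hφtend.sub (tendsto_const_nhds (x := xb))
        simpa using h3.norm.const_mul L1
      exact tendsto_sub_nhds_zero_iff.1 (squeeze_zero_norm hnorm h2)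
    have hlamphi : ∀ j, lam (K + φ j) = lam K := fun j => hlamK _ (Nat.le_add_right _ _)
    have hxbmin : ∀ z ∈ C, f xb ≤ f z := by
      intro z hz
      have hineq : ∀ j, 0 ≤ (inner ℝ (x (K + φ j + 1) - x (K + φ j)
          + lam K • f' (x (K + φ j))) (z - x (K + φ j + 1)) : ℝ) := by
        intro j
        have h := hVI (K + φ j) z hz
        rwa [hlamphi j] at h
      have hlim : Tendsto (fun j => (inner ℝ (x (K + φ j + 1) - x (K + φ j)
          + lam K • f' (x (K + φ j))) (z - x (K + φ j + 1)) : ℝ))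
          atTop (𝓝 ((inner ℝ ((0:EuclideanSpace ℝ (Fin m)) + lam K • f' xb) (z - xb)) : ℝ)) :=
        Filter.Tendsto.inner (hddphi.add (hgrad.const_smul (lam K)))
          (tendsto_const_nhds.sub hsub2)
      have h0 := ge_of_tendsto hlim (Eventually.of_forall hineq)
      rw [zero_add, real_inner_smul_left] at h0
      have h1 : 0 ≤ (inner ℝ (f' xb) (z - xb) : ℝ) := by nlinarith [hlampos K, h0]
      exact hpseudo xb hxbC z hz h1
    -- convergence of the whole sequence to xb
    have hconv : Tendsto (fun j => x (K + j)) atTop (𝓝 xb) := by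
      have hfejb : ∀ j, ‖x (K + (j+1)) - xb‖ ^ 2 + 2 * lam 0 / σ * f (x (K + (j+1))) ≤
          ‖x (K + j) - xb‖ ^ 2 + 2 * lam 0 / σ * f (x (K + j)) := hfejer xb hxbC hxbmin
      have hcanti : Antitone (fun j => ‖x (K + j) - xb‖ ^ 2 + 2 * lam 0 / σ * f (x (K + j))) :=
        antitone_nat_of_succ_le fun j => hfejb j
      have hcbdd : BddBelow (Set.range
          (fun j => ‖x (K + j) - xb‖ ^ 2 + 2 * lam 0 / σ * f (x (K + j)))) := by
        refine ⟨2 * lam 0 / σ * f xs, ?_⟩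
        rintro r ⟨j, rfl⟩
        have h1 : f xs ≤ f (x (K + j)) := hxsmin _ (hxC _)
        nlinarith [sq_nonneg ‖x (K + j) - xb‖, mul_le_mul_of_nonneg_left h1
          (by positivity : (0:ℝ) ≤ 2 * lam 0 / σ)]
      obtain ⟨lc, hlc⟩ : ∃ lc, Tendsto
          (fun j => ‖x (K + j) - xb‖ ^ 2 + 2 * lam 0 / σ * f (x (K + j))) atTop (𝓝 lc) :=
        ⟨_, tendsto_atTop_ciInf hcanti hcbdd⟩
      have hb : Tendsto (fun j => ‖x (K + j) - xb‖ ^ 2) atTop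
          (𝓝 (lc - 2 * lam 0 / σ * Fl)) := by
        have h := hlc.sub (hFl.const_mul (2 * lam 0 / σ))
        exact h.congr fun j => by
          show ‖x (K + j) - xb‖ ^ 2 + 2 * lam 0 / σ * f (x (K + j))
              - 2 * lam 0 / σ * y j = ‖x (K + j) - xb‖ ^ 2
          have hy : y j = f (x (K + j)) := rfl
          rw [hy]; ring
      have hbphi : Tendsto (fun j => ‖x (K + φ j) - xb‖ ^ 2) atTop (𝓝 0) := by
        have h1 : Tendsto (fun j => x (K + φ j) - xb) atTop (𝓝 0) := by
          simpa using hφtend.sub (tendsto_const_nhds (x := xb))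
        simpa using h1.norm.pow 2
      have hbphi' : Tendsto (fun j => ‖x (K + φ j) - xb‖ ^ 2) atTop
          (𝓝 (lc - 2 * lam 0 / σ * Fl)) := hb.comp hφ.tendsto_atTop
      have hl0 : lc - 2 * lam 0 / σ * Fl = 0 := tendsto_nhds_unique hbphi' hbphi
      rw [hl0] at hb
      have hnormto : Tendsto (fun j => ‖x (K + j) - xb‖) atTop (𝓝 0) := by
        have h := (Real.continuous_sqrt.tendsto 0).comp hb
        rw [Real.sqrt_zero] at h
        exact h.congr fun j => Real.sqrt_sq (norm_nonneg _)
      exact tendsto_sub_nhds_zero_iff.1 (tendsto_zero_iff_norm_tendsto_zero.2 hnormto)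
    refine ⟨xb, hxbC, ?_, hxbmin⟩
    have := (tendsto_add_atTop_iff_nat K).1 (hconv.congr fun j => by rw [Nat.add_comm])
    exact this
end

section
/- If f is quasiconvex on C, {x^k} is generated by Algorithm GDA, and x̂ ∈ C satisfies f(x̂) ≤ f(x^k) for all k, then ‖x^{k+1} − x̂‖² ≤ ‖x^k − x̂‖² − ‖x^{k+1} − x^k‖² + 2λ_k⟨∇f(x^k), x^k − x^{k+1}⟩, and consequently the sequence {‖x^k − x̂‖} converges. -/
open Filter Set Topology

set_option maxHeartbeats 1000000 in
lemma aux_grad_nonpos {E : Type*} [NormedAddCommGroup E] [InnerProductSpace ℝ E] [CompleteSpace E]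
    {f : E → ℝ} {g x d : E} (hf : HasGradientAt f g x)
    (h : ∀ t ∈ Set.Ioc (0:ℝ) 1, f (x + t • d) ≤ f x) :
    (inner ℝ g d : ℝ) ≤ 0 := by
  have hφ : HasDerivAt (fun t : ℝ => x + t • d) d 0 := by
    simpa using ((hasDerivAt_id (0:ℝ)).smul_const d).const_add x
  have hG : HasDerivAt (fun t : ℝ => f (x + t • d)) (inner ℝ g d : ℝ) 0 := by
    have hfd : HasFDerivAt f ((InnerProductSpace.toDual ℝ E) g) (x + (0:ℝ) • d) := by
      simpa using hf.hasFDerivAt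
    have := hfd.comp_hasDerivAt 0 hφ
    simp only [InnerProductSpace.toDual_apply_apply] at this
    exact this
  have hG' := (hG.hasDerivWithinAt (s := Set.Ioi (0:ℝ)))
  rw [hasDerivWithinAt_iff_tendsto_slope] at hG'
  have hne : (Set.Ioi (0:ℝ)) \ {0} = Set.Ioi 0 := by
    ext t; simp (config := {contextual := true}) [lt_irrefl, ne_of_gt]
  rw [hne] at hG'
  refine le_of_tendsto hG' ?_
  filter_upwards [Ioc_mem_nhdsGT_of_mem (by simp : (0:ℝ) ∈ Set.Ico (0:ℝ) 1)] with t ht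
  have h1 : f (x + t • d) ≤ f x := h t ht
  have hs : slope (fun t : ℝ => f (x + t • d)) 0 t = (f (x + t • d) - f x) / t := by
    rw [slope_def_field]
    simp
  rw [hs]
  apply div_nonpos_of_nonpos_of_nonneg
  · linarith
  · exact ht.1.le

set_option maxHeartbeats 1000000 in
lemma aux_vi {m : ℕ} (C : Set (EuclideanSpace ℝ (Fin m))) (hCconv : Convex ℝ C)
    (y p : EuclideanSpace ℝ (Fin m)) (hmem : p ∈ C)
    (h : ∀ z ∈ C, ‖p - y‖ ≤ ‖z - y‖) :
    ∀ w ∈ C, (inner ℝ (y - p) (w - p) : ℝ) ≤ 0 := by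
  have hmin : ‖y - p‖ = ⨅ w : C, ‖y - w‖ := by
    haveI : Nonempty C := ⟨⟨p, hmem⟩⟩
    apply le_antisymm
    · apply le_ciInf
      intro w
      calc ‖y - p‖ = ‖p - y‖ := by rw [norm_sub_rev]
        _ ≤ ‖(w : EuclideanSpace ℝ (Fin m)) - y‖ := h w w.2
        _ = ‖y - w‖ := by rw [norm_sub_rev]
    · have hbb : BddBelow (Set.range fun w : C => ‖y - (w : EuclideanSpace ℝ (Fin m))‖) := by
        refine ⟨0, ?_⟩
        rintro _ ⟨w, rfl⟩
        exact norm_nonneg _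
      exact ciInf_le hbb ⟨p, hmem⟩
  exact fun w hw => (norm_eq_iInf_iff_real_inner_le_zero hCconv hmem).1 hmin w hw

set_option maxHeartbeats 1000000 in
theorem stmt_17 {m : ℕ} (C : Set (EuclideanSpace ℝ (Fin m))) (hC : C.Nonempty)
    (hCcl : IsClosed C) (hCconv : Convex ℝ C)
    (f : EuclideanSpace ℝ (Fin m) → ℝ)
    (f' : EuclideanSpace ℝ (Fin m) → EuclideanSpace ℝ (Fin m))
    (U : Set (EuclideanSpace ℝ (Fin m))) (hU : IsOpen U) (hCU : C ⊆ U)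
    (hf : ∀ x ∈ U, HasGradientAt f (f' x) x)
    (hquasi : ∀ u ∈ C, ∀ v ∈ C, ∀ l ∈ Set.Icc (0:ℝ) 1,
      f (l • u + (1 - l) • v) ≤ max (f u) (f v))
    (x : ℕ → EuclideanSpace ℝ (Fin m)) (lam : ℕ → ℝ)
    (hx0 : x 0 ∈ C) (hlam : ∀ k, 0 < lam k)
    (hproj : ∀ k, x (k + 1) ∈ C ∧ ∀ z ∈ C,
      ‖x (k + 1) - (x k - lam k • f' (x k))‖ ≤ ‖z - (x k - lam k • f' (x k))‖)
    (hnonneg : ∀ k, 0 ≤ (inner ℝ (f' (x k)) (x k - x (k + 1)) : ℝ))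
    (hsum : Summable (fun k => lam k * (inner ℝ (f' (x k)) (x k - x (k + 1)) : ℝ)))
    (xh : EuclideanSpace ℝ (Fin m)) (hxh : xh ∈ C)
    (hxhle : ∀ k, f xh ≤ f (x k)) :
    (∀ k, ‖x (k + 1) - xh‖ ^ 2 ≤ ‖x k - xh‖ ^ 2 - ‖x (k + 1) - x k‖ ^ 2
        + 2 * lam k * (inner ℝ (f' (x k)) (x k - x (k + 1)) : ℝ)) ∧
    ∃ c : ℝ, Filter.Tendsto (fun k => ‖x k - xh‖) Filter.atTop (nhds c) := by
  have hxC : ∀ k, x k ∈ C := by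
    intro k; cases k with
    | zero => exact hx0
    | succ n => exact (hproj n).1
  -- variational inequality for projections
  have hVI : ∀ k, ∀ w ∈ C,
      (inner ℝ ((x k - lam k • f' (x k)) - x (k+1)) (w - x (k+1)) : ℝ) ≤ 0 := by
    intro k
    exact aux_vi C hCconv _ _ (hproj k).1 (hproj k).2
  -- quasiconvexity consequence
  have hquasi' : ∀ k, (inner ℝ (f' (x k)) (xh - x k) : ℝ) ≤ 0 := by
    intro k
    apply aux_grad_nonpos (hf (x k) (hCU (hxC k)))
    intro t ht
    have h1 := hquasi xh hxh (x k) (hxC k) t ⟨le_of_lt ht.1, ht.2⟩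
    have h2 : t • xh + (1 - t) • x k = x k + t • (xh - x k) := by module
    rw [h2, max_eq_right (hxhle k)] at h1
    exact h1
  -- Part 1
  have part1 : ∀ k, ‖x (k + 1) - xh‖ ^ 2 ≤ ‖x k - xh‖ ^ 2 - ‖x (k + 1) - x k‖ ^ 2
      + 2 * lam k * (inner ℝ (f' (x k)) (x k - x (k + 1)) : ℝ) := by
    intro k
    set p := x (k+1)
    set b := x k
    set g := f' (x k)
    set l := lam k
    have hVIx : (inner ℝ ((b - l • g) - p) (xh - p) : ℝ) ≤ 0 := hVI k xh hxh
    have e1 : (inner ℝ ((b - l • g) - p) (xh - p) : ℝ)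
        = (inner ℝ (b - p) (xh - p) : ℝ) - l * (inner ℝ g (xh - p) : ℝ) := by
      rw [show (b - l • g) - p = (b - p) - l • g by abel]
      rw [inner_sub_left, real_inner_smul_left]
    have e2 : (inner ℝ g (xh - p) : ℝ)
        = (inner ℝ g (xh - b) : ℝ) + (inner ℝ g (b - p) : ℝ) := by
      rw [← inner_add_right]; congr 1; abel
    have h3 : (inner ℝ (b - p) (xh - p) : ℝ) ≤ l * (inner ℝ g (b - p) : ℝ) := by
      have := hquasi' k
      nlinarith [mul_nonneg (le_of_lt (hlam k)) (hnonneg k), (hlam k).le]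
    have hid : ‖p - xh‖ ^ 2 = ‖b - xh‖ ^ 2 - ‖p - b‖ ^ 2
        + 2 * (inner ℝ (b - p) (xh - p) : ℝ) := by
      have hexp : ∀ u v : EuclideanSpace ℝ (Fin m),
          ‖u - v‖ ^ 2 = ‖u‖ ^ 2 - 2 * (inner ℝ u v : ℝ) + ‖v‖ ^ 2 := fun u v => by
        rw [@norm_sub_sq_real]; try ring
      simp only [hexp, inner_sub_left, inner_sub_right, real_inner_self_eq_norm_sq]
      rw [real_inner_comm b p]
      ring
    calc ‖p - xh‖ ^ 2 = ‖b - xh‖ ^ 2 - ‖p - b‖ ^ 2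
          + 2 * (inner ℝ (b - p) (xh - p) : ℝ) := hid
      _ ≤ ‖b - xh‖ ^ 2 - ‖p - b‖ ^ 2 + 2 * (l * (inner ℝ g (b - p) : ℝ)) := by linarith
      _ = ‖b - xh‖ ^ 2 - ‖p - b‖ ^ 2 + 2 * l * (inner ℝ g (b - p) : ℝ) := by ring
  refine ⟨part1, ?_⟩
  -- Part 2: convergence
  set t : ℕ → ℝ := fun k => lam k * (inner ℝ (f' (x k)) (x k - x (k + 1)) : ℝ) with ht_def
  have ht0 : ∀ k, 0 ≤ t k := fun k => mul_nonneg (hlam k).le (hnonneg k)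
  set a : ℕ → ℝ := fun k => ‖x k - xh‖ ^ 2 with ha_def
  have hrec : ∀ k, a (k+1) ≤ a k + 2 * t k := by
    intro k
    have := part1 k
    have hn : (0:ℝ) ≤ ‖x (k+1) - x k‖ ^ 2 := sq_nonneg _
    simp only [ha_def, ht_def]
    nlinarith
  set G : ℕ → ℝ := fun k => a k + 2 * ∑' i, t (i + k) with hG_def
  have htailsum : ∀ k, Summable (fun i => t (i + k)) :=
    fun k => (summable_nat_add_iff k).2 hsum
  have hant : Antitone G := by
    apply antitone_nat_of_succ_le
    intro k
    have hsplit : ∑' i, t (i + k) = t k + ∑' i, t (i + (k+1)) := by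
      rw [Summable.tsum_eq_zero_add (htailsum k)]
      simp only [zero_add]
      congr 1
      apply tsum_congr
      intro n; congr 1; omega
    simp only [hG_def, hsplit]
    have := hrec k
    linarith
  have hbdd : BddBelow (Set.range G) := by
    refine ⟨0, ?_⟩
    rintro _ ⟨k, rfl⟩
    have h1 : 0 ≤ ∑' i, t (i + k) := tsum_nonneg fun i => ht0 _
    have h2 : 0 ≤ a k := sq_nonneg _
    simp only [hG_def]
    linarith
  have hGlim : Tendsto G atTop (𝓝 (⨅ k, G k)) := tendsto_atTop_ciInf hant hbdd
  have htail0 : Tendsto (fun k => ∑' i, t (i + k)) atTop (𝓝 0) := tendsto_sum_nat_add t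
  have halim : Tendsto a atTop (𝓝 (⨅ k, G k)) := by
    have : Tendsto (fun k => G k - 2 * ∑' i, t (i + k)) atTop (𝓝 ((⨅ k, G k) - 2 * 0)) :=
      hGlim.sub (htail0.const_mul 2)
    simpa only [hG_def, add_sub_cancel_right, mul_zero, sub_zero] using this
  refine ⟨Real.sqrt (⨅ k, G k), ?_⟩
  have := (Real.continuous_sqrt.tendsto _).comp halim
  convert this using 2 with k
  simp only [Function.comp_apply, ha_def]
  rw [Real.sqrt_sq (norm_nonneg _)]
end
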